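/- arXiv:2605.05490 — 6 statements merged into one kernel-verified Lean document; each statement's English description precedes it below -/
import Mathlib

section
/- Suppose A and P_0 satisfy the Kalman rank condition: there exists K such that ℝ^N = Im(A^K P_0) + ... + Im(P_0). Let (E_k)_{k=0}^κ be the successive orthogonal complements, i.e. E_0 = Im(P_0), V_k = V_{k-1} ⊕ E_k with E_k ⊥ V_{k-1}, where κ is the smallest such K. Then ℝ^N is the orthogonal direct sum of E_0, ..., E_κ, and A(E_k) ⊆ E_0 ⊕ E_1 ⊕ ... ⊕ E_{k+1} for each k = 0, ..., κ-1. -/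
open Matrix

open scoped RealInnerProductSpace

lemma toEuclideanLin_mul {N : ℕ} (M M' : Matrix (Fin N) (Fin N) ℝ) :
    Matrix.toEuclideanLin (M * M') =
      (Matrix.toEuclideanLin M) ∘ₗ (Matrix.toEuclideanLin M') := by
  ext x i
  simp [Matrix.toEuclideanLin, Matrix.mulVec_mulVec]

/-- Under the Kalman rank condition, the successive orthogonal
complements `E k` give an orthogonal decomposition of `ℝ^N`, and
`A (E k) ⊆ E 0 ⊕ ... ⊕ E (k+1)` for `k = 0, ..., κ-1`. -/
theorem kalman_orthogonal_decomposition (N : ℕ) (A P0 : Matrix (Fin N) (Fin N) ℝ)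
    (hproj : P0 * P0 = P0) (hsym : P0ᵀ = P0)
    (V : ℕ → Submodule ℝ (EuclideanSpace ℝ (Fin N)))
    (hV : ∀ k, V k = ⨆ i ∈ Finset.range (k + 1),
      LinearMap.range (Matrix.toEuclideanLin (A ^ i * P0)))
    (κ : ℕ) (hκ : V κ = ⊤) (hmin : ∀ K, V K = ⊤ → κ ≤ K)
    (E : ℕ → Submodule ℝ (EuclideanSpace ℝ (Fin N)))
    (hE0 : E 0 = V 0)
    (hEk : ∀ k, 1 ≤ k → k ≤ κ → E k = (V (k - 1))ᗮ ⊓ V k) :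
    ((⨆ k ∈ Finset.range (κ + 1), E k) = ⊤ ∧
      ∀ i j, i < j → j ≤ κ → ∀ x ∈ E i, ∀ y ∈ E j, ⟪x, y⟫ = 0) ∧
    (∀ k < κ, (E k).map (Matrix.toEuclideanLin A) ≤ ⨆ j ∈ Finset.range (k + 2), E j) := by
  have hVmono : ∀ {m n : ℕ}, m ≤ n → V m ≤ V n := by
    intro m n h
    rw [hV, hV]
    refine iSup_le fun i => iSup_le fun hi => ?_
    have : i ∈ Finset.range (n + 1) :=
      Finset.mem_range.mpr (lt_of_lt_of_le (Finset.mem_range.mp hi) (by omega))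
    exact le_iSup_of_le i (le_iSup_of_le this le_rfl)
  have hEleV : ∀ k, k ≤ κ → E k ≤ V k := by
    intro k hk
    rcases Nat.eq_zero_or_pos k with h0 | h1
    · rw [h0, hE0]
    · rw [hEk k h1 hk]; exact inf_le_right
  have hsup : ∀ n, n ≤ κ → (⨆ k ∈ Finset.range (n + 1), E k) = V n := by
    intro n hn
    induction n with
    | zero => simp [hE0]
    | succ m ih =>
      rw [Finset.range_add_one, Finset.iSup_insert, ih (by omega),
        hEk (m + 1) (by omega) hn]
      simp only [Nat.add_sub_cancel]
      rw [sup_comm]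
      exact Submodule.sup_orthogonal_inf_of_hasOrthogonalProjection (hVmono (Nat.le_succ m))
  refine ⟨⟨by rw [hsup κ le_rfl, hκ], ?_⟩, ?_⟩
  · intro i j hij hj x hx y hy
    have hjy : y ∈ (V (j - 1))ᗮ := by
      have := hEk j (by omega) hj
      rw [this] at hy
      exact hy.1
    have hxv : x ∈ V (j - 1) := hVmono (by omega) (hEleV i (by omega) hx)
    exact (Submodule.mem_orthogonal _ y).mp hjy x hxv
  · intro k hk
    rw [hsup (k + 1) (by omega)]
    refine le_trans (Submodule.map_mono (hEleV k (by omega))) ?_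
    rw [hV k, hV (k + 1)]
    rw [Submodule.map_iSup]
    refine iSup_le fun i => ?_
    rw [Submodule.map_iSup]
    refine iSup_le fun hi => ?_
    have h1 : (i + 1) ∈ Finset.range (k + 1 + 1) :=
      Finset.mem_range.mpr (by have := Finset.mem_range.mp hi; omega)
    refine le_iSup_of_le (i + 1) (le_iSup_of_le h1 ?_)
    rw [Submodule.map_le_iff_le_comap]
    rintro x ⟨y, rfl⟩
    refine ⟨y, ?_⟩
    rw [← LinearMap.comp_apply, ← toEuclideanLin_mul, ← mul_assoc, ← pow_succ']
end

section
/- For the principal part A_0 = Σ_{j=0}^{κ-1} P_{j+1} A P_j, and for every integer l with 0 ≤ l ≤ κ, the power A_0^l equals Σ_{j=0}^{κ-l} P_{j+l} A^l P_j. -/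
open Matrix

open scoped RealInnerProductSpace

/-- For the principal part `A₀ = Σ_{j=0}^{κ-1} P_{j+1} A P_j` and every
`0 ≤ l ≤ κ`, one has `A₀^l = Σ_{j=0}^{κ-l} P_{j+l} A^l P_j`. -/
theorem principal_part_power (N : ℕ) (A P0 : Matrix (Fin N) (Fin N) ℝ)
    (hproj : P0 * P0 = P0) (hsym : P0ᵀ = P0)
    (V : ℕ → Submodule ℝ (EuclideanSpace ℝ (Fin N)))
    (hV : ∀ k, V k = ⨆ i ∈ Finset.range (k + 1),
      LinearMap.range (Matrix.toEuclideanLin (A ^ i * P0)))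
    (κ : ℕ) (hκ : V κ = ⊤) (hmin : ∀ K, V K = ⊤ → κ ≤ K)
    (E : ℕ → Submodule ℝ (EuclideanSpace ℝ (Fin N)))
    (hE0 : E 0 = V 0)
    (hEk : ∀ k, 1 ≤ k → k ≤ κ → E k = (V (k - 1))ᗮ ⊓ V k)
    (P : ℕ → Module.End ℝ (EuclideanSpace ℝ (Fin N)))
    (hPmem : ∀ j x, P j x ∈ E j)
    (hPortho : ∀ j x, ∀ y ∈ E j, ⟪x - P j x, y⟫ = 0)
    (A0 : Module.End ℝ (EuclideanSpace ℝ (Fin N)))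
    (hA0 : A0 = ∑ j ∈ Finset.range κ, P (j + 1) * Matrix.toEuclideanLin A * P j) :
    ∀ l ≤ κ, A0 ^ l =
      ∑ j ∈ Finset.range (κ - l + 1), P (j + l) * (Matrix.toEuclideanLin A) ^ l * P j := by
  set T : Module.End ℝ (EuclideanSpace ℝ (Fin N)) := Matrix.toEuclideanLin A with hTdef
  -- monotonicity of V
  have hVmono : ∀ j k : ℕ, j ≤ k → V j ≤ V k := by
    intro j k hjk
    rw [hV, hV]
    exact biSup_mono fun i hi => Finset.mem_range.mpr
      (lt_of_lt_of_le (Finset.mem_range.mp hi) (by omega))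
  have hEV : ∀ k, k ≤ κ → E k ≤ V k := by
    intro k hk
    rcases Nat.eq_zero_or_pos k with h0 | h1
    · subst h0; rw [hE0]
    · rw [hEk k h1 hk]; exact inf_le_right
  have hEVo : ∀ k, 1 ≤ k → k ≤ κ → E k ≤ (V (k - 1))ᗮ := by
    intro k h1 hk; rw [hEk k h1 hk]; exact inf_le_left
  -- toEuclideanLin is multiplicative
  have hTmul : ∀ M K : Matrix (Fin N) (Fin N) ℝ,
      Matrix.toEuclideanLin (M * K) = Matrix.toEuclideanLin M * Matrix.toEuclideanLin K := by
    intro M K; ext x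
    simp [Matrix.toEuclideanLin_apply, Matrix.mulVec_mulVec, Module.End.mul_apply]
  -- A maps V k into V (k+1)
  have hTV : ∀ k, ∀ x ∈ V k, T x ∈ V (k + 1) := by
    intro k x hx
    have hmap : (V k).map T ≤ V (k + 1) := by
      rw [hV k, hV (k + 1), Submodule.map_iSup]
      apply iSup_le; intro i
      rw [Submodule.map_iSup]
      apply iSup_le; intro hi
      rw [← LinearMap.range_comp]
      have hcomp : T ∘ₗ Matrix.toEuclideanLin (A ^ i * P0)
          = Matrix.toEuclideanLin (A ^ (i + 1) * P0) := by
        rw [pow_succ', mul_assoc, hTmul A (A ^ i * P0)]; rfl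
      rw [hcomp]
      exact le_iSup₂ (f := fun i (_ : i ∈ Finset.range (k + 2)) =>
        LinearMap.range (Matrix.toEuclideanLin (A ^ i * P0))) (i + 1)
        (Finset.mem_range.mpr (by have := Finset.mem_range.mp hi; omega))
    exact hmap (Submodule.mem_map_of_mem hx)
  -- P j is identity on E j
  have hPself : ∀ j, ∀ x ∈ E j, P j x = x := by
    intro j x hx
    have hmem : x - P j x ∈ E j := Submodule.sub_mem _ hx (hPmem j x)
    have h0 := hPortho j x (x - P j x) hmem
    have hz : x - P j x = 0 := inner_self_eq_zero.mp h0
    exact (sub_eq_zero.mp hz).symm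
  -- P j vanishes on vectors orthogonal to E j
  have hPzero : ∀ j x, (∀ y ∈ E j, ⟪x, y⟫ = 0) → P j x = 0 := by
    intro j x hx
    have h1 := hPortho j x (P j x) (hPmem j x)
    rw [inner_sub_left] at h1
    have h2 := hx (P j x) (hPmem j x)
    have h3 : ⟪P j x, P j x⟫ = (0 : ℝ) := by linarith
    exact inner_self_eq_zero.mp h3
  -- the E j are mutually orthogonal
  have hEorth : ∀ i j, i ≤ κ → j ≤ κ → i ≠ j → ∀ x ∈ E i, ∀ y ∈ E j, ⟪x, y⟫ = (0 : ℝ) := by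
    have key : ∀ i j, i < j → j ≤ κ → ∀ x ∈ E i, ∀ y ∈ E j, ⟪x, y⟫ = (0 : ℝ) := by
      intro i j hij hj x hx y hy
      have h1 : 1 ≤ j := by omega
      have hyo : y ∈ (V (j - 1))ᗮ := hEVo j h1 hj hy
      have hxV : x ∈ V (j - 1) := hVmono i (j - 1) (by omega) (hEV i (by omega) hx)
      exact (Submodule.mem_orthogonal _ y).mp hyo x hxV
    intro i j hi hj hne x hx y hy
    rcases lt_or_gt_of_ne hne with h | h
    · exact key i j h hj x hx y hy
    · rw [real_inner_comm]; exact key j i h hi y hy x hx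
  have hPEzero : ∀ i j, i ≤ κ → j ≤ κ → i ≠ j → ∀ x ∈ E j, P i x = 0 := by
    intro i j hi hj hne x hx
    exact hPzero i x (fun y hy => hEorth j i hj hi (Ne.symm hne) x hx y hy)
  have hPP : ∀ i j, i ≤ κ → j ≤ κ → i ≠ j → P i * P j = 0 := by
    intro i j hi hj hne
    refine LinearMap.ext fun x => ?_
    simp only [Module.End.mul_apply, LinearMap.zero_apply]
    exact hPEzero i j hi hj hne (P j x) (hPmem j x)
  have hPidem : ∀ j, P j * P j = P j := by
    intro j
    refine LinearMap.ext fun x => ?_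
    simp only [Module.End.mul_apply]
    exact hPself j (P j x) (hPmem j x)
  have hPV : ∀ k x, 1 ≤ k → k ≤ κ → x ∈ V (k - 1) → P k x = 0 := by
    intro k x h1 hk hx
    apply hPzero
    intro y hy
    exact (Submodule.mem_orthogonal _ y).mp (hEVo k h1 hk hy) x hx
  -- cross vanishing : P m (T P j) = 0 for m > j + 1
  have hcross : ∀ m j, m ≤ κ → j ≤ κ → j + 1 < m → P m * (T * P j) = 0 := by
    intro m j hm hj hlt
    refine LinearMap.ext fun x => ?_
    simp only [Module.End.mul_apply, LinearMap.zero_apply]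
    have h1 : T (P j x) ∈ V (j + 1) := hTV j (P j x) (hEV j hj (hPmem j x))
    have h2 : T (P j x) ∈ V (m - 1) := hVmono (j + 1) (m - 1) (by omega) h1
    exact hPV m _ (by omega) hm h2
  -- vectors orthogonal to all E k, k ≤ κ, vanish
  have hVbot : ∀ x : EuclideanSpace ℝ (Fin N),
      (∀ k, k ≤ κ → ∀ e ∈ E k, ⟪x, e⟫ = 0) → x = 0 := by
    intro x hx
    have hstep : ∀ k, k ≤ κ → x ∈ (V k)ᗮ := by
      intro k
      induction k with
      | zero =>
          intro _
          rw [Submodule.mem_orthogonal']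
          intro u hu
          exact hx 0 (by omega) u (hE0 ▸ hu)
      | succ n ih =>
          intro hk
          have hle : V n ≤ V (n + 1) := hVmono n (n + 1) (by omega)
          have hVsup : V (n + 1) = V n ⊔ E (n + 1) := by
            have hso := Submodule.sup_orthogonal_inf_of_hasOrthogonalProjection hle
            rw [hEk (n + 1) (by omega) hk]
            simpa using hso.symm
          rw [hVsup, Submodule.mem_orthogonal']
          intro u hu
          rcases Submodule.mem_sup.mp hu with ⟨a, ha, b, hb, rfl⟩
          have h1 : ⟪x, a⟫ = (0 : ℝ) :=
            (Submodule.mem_orthogonal' _ _).mp (ih (by omega)) a ha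
          have h2 : ⟪x, b⟫ = (0 : ℝ) := hx (n + 1) hk b hb
          rw [inner_add_right, h1, h2, add_zero]
    have hmm := hstep κ le_rfl
    rw [hκ, Submodule.top_orthogonal_eq_bot] at hmm
    exact Submodule.mem_bot ℝ |>.mp hmm
  -- the projections sum to the identity
  have hsumP : ∑ k ∈ Finset.range (κ + 1), P k = (1 : Module.End ℝ (EuclideanSpace ℝ (Fin N))) := by
    refine LinearMap.ext fun x => ?_
    simp only [LinearMap.sum_apply, Module.End.one_apply]
    have hdiff : x - ∑ k ∈ Finset.range (κ + 1), P k x = 0 := by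
      apply hVbot
      intro k hk e he
      have hs : ∑ j ∈ Finset.range (κ + 1), ⟪P j x, e⟫ = ⟪P k x, e⟫ := by
        refine Finset.sum_eq_single_of_mem k (Finset.mem_range.mpr (by omega)) ?_
        intro j hj hne
        exact hEorth j k (by have := Finset.mem_range.mp hj; omega) hk hne
          (P j x) (hPmem j x) e he
      rw [inner_sub_left, sum_inner, hs]
      have hpo := hPortho k x e he
      rw [inner_sub_left] at hpo
      linarith
    exact (sub_eq_zero.mp hdiff).symm
  -- expansion of a power using the resolution of identity
  have hexpand : ∀ (l' : ℕ) (B : Module.End ℝ (EuclideanSpace ℝ (Fin N))),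
      T ^ (l' + 1) * B = ∑ m ∈ Finset.range (κ + 1), T ^ l' * (P m * (T * B)) := by
    intro l' B
    rw [pow_succ, mul_assoc]
    calc T ^ l' * (T * B)
        = T ^ l' * ((∑ m ∈ Finset.range (κ + 1), P m) * (T * B)) := by rw [hsumP, one_mul]
      _ = ∑ m ∈ Finset.range (κ + 1), T ^ l' * (P m * (T * B)) := by
          rw [Finset.sum_mul, Finset.mul_sum]
  -- the vanishing lemma for powers : P i T^l P j = 0 for i > j + l
  have hLzero : ∀ l' : ℕ, ∀ i j, i ≤ κ → j ≤ κ → j + l' < i → P i * (T ^ l' * P j) = 0 := by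
    intro l'
    induction l' with
    | zero =>
        intro i j hi hj hlt
        rw [pow_zero, one_mul]
        exact hPP i j hi hj (by omega)
    | succ n ih =>
        intro i j hi hj hlt
        rw [hexpand n (P j), Finset.mul_sum]
        apply Finset.sum_eq_zero
        intro m hm
        have hmκ : m ≤ κ := by have := Finset.mem_range.mp hm; omega
        rcases le_or_gt m (j + 1) with hc | hc
        · have h0 : P i * (T ^ n * P m) = 0 := ih i m hi hmκ (by omega)
          calc P i * (T ^ n * (P m * (T * P j)))
              = P i * (T ^ n * P m) * (T * P j) := by simp only [mul_assoc]
            _ = 0 := by rw [h0, zero_mul]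
        · have h0 : P m * (T * P j) = 0 := hcross m j hmκ hj hc
          rw [h0, mul_zero, mul_zero]
  -- the key collapsing identity
  have hkey : ∀ l' j, j + l' + 1 ≤ κ →
      P (j + l' + 1) * (T ^ l' * (P (j + 1) * (T * P j)))
        = P (j + l' + 1) * (T ^ (l' + 1) * P j) := by
    intro l' j hjl
    conv_rhs => rw [hexpand l' (P j), Finset.mul_sum]
    rw [Finset.sum_eq_single_of_mem (j + 1) (Finset.mem_range.mpr (by omega)) ?_]
    intro m hm hne
    have hmκ : m ≤ κ := by have := Finset.mem_range.mp hm; omega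
    rcases lt_or_gt_of_ne hne with hc | hc
    · have h0 : P (j + l' + 1) * (T ^ l' * P m) = 0 :=
        hLzero l' (j + l' + 1) m (by omega) hmκ (by omega)
      calc P (j + l' + 1) * (T ^ l' * (P m * (T * P j)))
          = P (j + l' + 1) * (T ^ l' * P m) * (T * P j) := by simp only [mul_assoc]
        _ = 0 := by rw [h0, zero_mul]
    · have h0 : P m * (T * P j) = 0 := hcross m j hmκ (by omega) hc
      rw [h0, mul_zero, mul_zero]
  -- main induction
  intro l
  induction l with
  | zero =>
      intro _
      rw [pow_zero, ← hsumP, Nat.sub_zero]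
      refine Finset.sum_congr rfl fun j _ => ?_
      simp only [Nat.add_zero, pow_zero, mul_one]
      exact (hPidem j).symm
  | succ n ih =>
      intro hn1
      have hn : n ≤ κ := by omega
      rw [pow_succ, ih hn, hA0, Finset.sum_mul_sum, Finset.sum_comm]
      -- term-vanishing away from the diagonal j = j' + 1
      have hterm0 : ∀ j j', j ≤ κ → j' < κ → j ≠ j' + 1 →
          P (j + n) * T ^ n * P j * (P (j' + 1) * T * P j') = 0 := by
        intro j j' hj hj' hne
        have h0 : P j * P (j' + 1) = 0 := hPP j (j' + 1) hj (by omega) hne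
        calc P (j + n) * T ^ n * P j * (P (j' + 1) * T * P j')
            = P (j + n) * (T ^ n * ((P j * P (j' + 1)) * (T * P j'))) := by
              simp only [mul_assoc]
          _ = 0 := by rw [h0, zero_mul, mul_zero, mul_zero]
      have hsub : Finset.range (κ - (n + 1) + 1) ⊆ Finset.range κ :=
        Finset.range_subset_range.mpr (by omega)
      have hzero : ∀ j' ∈ Finset.range κ, j' ∉ Finset.range (κ - (n + 1) + 1) →
          ∑ j ∈ Finset.range (κ - n + 1),
            P (j + n) * T ^ n * P j * (P (j' + 1) * T * P j') = 0 := by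
        intro j' hj'κ hj'not
        apply Finset.sum_eq_zero
        intro j hj
        have hjle : j ≤ κ - n := by have := Finset.mem_range.mp hj; omega
        refine hterm0 j j' (by omega) (Finset.mem_range.mp hj'κ) ?_
        have hj'ge : κ - (n + 1) + 1 ≤ j' := by
          by_contra hcon
          exact hj'not (Finset.mem_range.mpr (by omega))
        omega
      rw [← Finset.sum_subset hsub hzero]
      refine Finset.sum_congr rfl fun j' hj' => ?_
      have hj'lt : j' < κ - (n + 1) + 1 := Finset.mem_range.mp hj'
      have hsingle : ∑ j ∈ Finset.range (κ - n + 1),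
          P (j + n) * T ^ n * P j * (P (j' + 1) * T * P j')
          = P (j' + 1 + n) * T ^ n * P (j' + 1) * (P (j' + 1) * T * P j') :=
        Finset.sum_eq_single_of_mem (j' + 1) (Finset.mem_range.mpr (by omega))
          (fun j hj hne =>
            hterm0 j j' (by have := Finset.mem_range.mp hj; omega) (by omega) hne)
      rw [hsingle]
      have e1 : j' + 1 + n = j' + n + 1 := by omega
      have e2 : j' + (n + 1) = j' + n + 1 := by omega
      rw [e1, e2]
      calc P (j' + n + 1) * T ^ n * P (j' + 1) * (P (j' + 1) * T * P j')
          = P (j' + n + 1) * (T ^ n * ((P (j' + 1) * P (j' + 1)) * (T * P j'))) := by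
            simp only [mul_assoc]
        _ = P (j' + n + 1) * (T ^ n * (P (j' + 1) * (T * P j'))) := by
            rw [hPidem (j' + 1)]
        _ = P (j' + n + 1) * (T ^ (n + 1) * P j') := hkey n j' (by omega)
        _ = P (j' + n + 1) * T ^ (n + 1) * P j' := by rw [mul_assoc]
end

section
/- Define A_h := Σ_{j=0}^κ Σ_{i=0}^{min(κ, j+1)} h^{j+1-i} P_i A P_j for h ≥ 0. Then for h > 0, A_h = h S(1/h) A S(h), and moreover A_h − A_0 = h Σ_{j=0}^κ Σ_{i=0}^j h^{j-i} P_i A P_j; consequently there is a constant C > 0 such that ‖A_h − A_0‖ ≤ C h for all 0 < h ≤ 1. -/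
/-!
Conjugation by `S(h) = Σ h^j P_j` multiplies the block `P_i A P_j` by `h^(j-i)`, so
`h S(1/h) A S(h)` is the sum of the blocks with coefficients `h^(j+1-i)`. Blocks with `i > j+1`
vanish; those with `i = j+1` have coefficient `1` and make up `A_0`; every other block carries a
factor `h`, and for `h ≤ 1` the remaining powers of `h` are at most `1`.
-/

open scoped RealInnerProductSpace

open Finset

theorem sum_range_sum_range_min_succ {M : Type*} [AddCommMonoid M] (κ : ℕ) (f : ℕ → ℕ → M) :
    ∑ j ∈ range (κ + 1), ∑ i ∈ range (min κ (j + 1) + 1), f i j =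
      ∑ j ∈ range (κ + 1), ∑ i ∈ range (j + 1), f i j + ∑ j ∈ range κ, f (j + 1) j := by
  have below : ∀ j ∈ range κ,
      ∑ i ∈ range (min κ (j + 1) + 1), f i j = ∑ i ∈ range (j + 1), f i j + f (j + 1) j := by
    intro j hj
    rw [min_eq_right (mem_range.mp hj), sum_range_succ]
  rw [sum_range_succ (fun j ↦ ∑ i ∈ range (min κ (j + 1) + 1), f i j),
    sum_range_succ (fun j ↦ ∑ i ∈ range (j + 1), f i j), sum_congr rfl below, sum_add_distrib,
    min_eq_left (Nat.le_succ κ)]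
  abel

theorem sum_pow_smul_sub_sum_subdiagonal {R M : Type*} [CommSemiring R] [AddCommGroup M]
    [Module R M] (κ : ℕ) (h : R) (B : ℕ → ℕ → M) :
    ∑ j ∈ range (κ + 1), ∑ i ∈ range (min κ (j + 1) + 1), h ^ (j + 1 - i) • B i j -
        ∑ j ∈ range κ, B (j + 1) j =
      h • ∑ j ∈ range (κ + 1), ∑ i ∈ range (j + 1), h ^ (j - i) • B i j := by
  simp only [sum_range_sum_range_min_succ, Nat.sub_self, pow_zero, one_smul,
    add_sub_cancel_right, smul_sum, smul_smul]
  refine sum_congr rfl fun j _ ↦ sum_congr rfl fun i hi ↦ ?_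
  rw [← pow_succ', Nat.sub_add_comm (Nat.lt_succ_iff.mp (mem_range.mp hi))]

theorem sum_smul_mul_mul_sum_smul {ι R A : Type*} [CommSemiring R] [Semiring A] [Algebra R A]
    (s t : Finset ι) (a b : ι → R) (P : ι → A) (X : A) :
    (∑ i ∈ s, a i • P i) * X * ∑ j ∈ t, b j • P j =
      ∑ i ∈ s, ∑ j ∈ t, (a i * b j) • (P i * X * P j) := by
  rw [sum_mul, sum_mul]
  simp_rw [mul_sum]
  refine sum_congr rfl fun i _ ↦ sum_congr rfl fun j _ ↦ ?_
  rw [smul_mul_assoc, smul_mul_assoc, mul_smul_comm, smul_smul]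

theorem smul_inv_scaling_mul_mul_scaling {K A : Type*} [Field K] [Ring A] [Algebra K A]
    (κ : ℕ) {h : K} (hh : h ≠ 0) (P : ℕ → A) (X : A)
    (hX : ∀ i j, j + 1 < i → i ≤ κ → j ≤ κ → P i * X * P j = 0) :
    h • ((∑ i ∈ range (κ + 1), h⁻¹ ^ i • P i) * X * ∑ j ∈ range (κ + 1), h ^ j • P j) =
      ∑ j ∈ range (κ + 1), ∑ i ∈ range (min κ (j + 1) + 1),
        h ^ (j + 1 - i) • (P i * X * P j) := by
  rw [sum_smul_mul_mul_sum_smul, sum_comm, smul_sum]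
  refine sum_congr rfl fun j hj ↦ ?_
  have hjκ := Nat.lt_succ_iff.mp (mem_range.mp hj)
  rw [smul_sum, ← sum_subset (range_subset_range.mpr (Nat.succ_le_succ (min_le_left _ _)))]
  · refine sum_congr rfl fun i hi ↦ ?_
    have hij : i ≤ j + 1 := by simp only [mem_range] at hi; omega
    rw [smul_smul, pow_sub₀ h hh hij, inv_pow]
    congr 1
    ring
  · intro i hi hi'
    simp only [mem_range] at hi hi'
    rw [hX i j (by omega) (by omega) hjκ, smul_zero, smul_zero]

theorem norm_sum_sum_pow_smul_le {α β E : Type*} [SeminormedAddCommGroup E] [NormedSpace ℝ E]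
    {h : ℝ} (h0 : 0 ≤ h) (h1 : h ≤ 1) (s : Finset α) (t : α → Finset β) (n : α → β → ℕ)
    (v : α → β → E) :
    ‖∑ j ∈ s, ∑ i ∈ t j, h ^ n j i • v j i‖ ≤ ∑ j ∈ s, ∑ i ∈ t j, ‖v j i‖ := by
  refine (norm_sum_le _ _).trans (sum_le_sum fun j _ ↦
    (norm_sum_le _ _).trans (sum_le_sum fun i _ ↦ ?_))
  rw [norm_smul, norm_pow, Real.norm_of_nonneg h0]
  exact mul_le_of_le_one_left (norm_nonneg _) (pow_le_one₀ h0 h1)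

theorem rescaled_drift_properties_general (N κ : ℕ)
    (P : ℕ → EuclideanSpace ℝ (Fin N) →L[ℝ] EuclideanSpace ℝ (Fin N))
    (AL : EuclideanSpace ℝ (Fin N) →L[ℝ] EuclideanSpace ℝ (Fin N))
    (hcompat : ∀ i j, j + 1 < i → i ≤ κ → j ≤ κ → P i * AL * P j = 0)
    (S : ℝ → EuclideanSpace ℝ (Fin N) →L[ℝ] EuclideanSpace ℝ (Fin N))
    (hS : ∀ r, S r = ∑ i ∈ Finset.range (κ + 1), r ^ i • P i)
    (A0 : EuclideanSpace ℝ (Fin N) →L[ℝ] EuclideanSpace ℝ (Fin N))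
    (hA0 : A0 = ∑ j ∈ Finset.range κ, P (j + 1) * AL * P j)
    (Ah : ℝ → EuclideanSpace ℝ (Fin N) →L[ℝ] EuclideanSpace ℝ (Fin N))
    (hAh : ∀ h, Ah h = ∑ j ∈ Finset.range (κ + 1), ∑ i ∈ Finset.range (min κ (j + 1) + 1),
      h ^ (j + 1 - i) • (P i * AL * P j)) :
    (∀ h : ℝ, 0 < h → Ah h = h • (S h⁻¹ * AL * S h)) ∧
    (∀ h : ℝ, Ah h - A0 =
      h • ∑ j ∈ Finset.range (κ + 1), ∑ i ∈ Finset.range (j + 1),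
        h ^ (j - i) • (P i * AL * P j)) ∧
    (∃ C : ℝ, 0 < C ∧ ∀ h : ℝ, 0 < h → h ≤ 1 → ‖Ah h - A0‖ ≤ C * h) := by
  have hdiff : ∀ h : ℝ, Ah h - A0 = h • ∑ j ∈ range (κ + 1), ∑ i ∈ range (j + 1),
      h ^ (j - i) • (P i * AL * P j) := fun h ↦ by
    rw [hAh, hA0]
    exact sum_pow_smul_sub_sum_subdiagonal κ h fun i j ↦ P i * AL * P j
  refine ⟨fun h hh ↦ ?_, hdiff, ?_⟩
  · rw [hAh, hS, hS]
    exact (smul_inv_scaling_mul_mul_scaling κ hh.ne' P AL hcompat).symm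
  · refine ⟨1 + ∑ j ∈ range (κ + 1), ∑ i ∈ range (j + 1), ‖P i * AL * P j‖, by positivity,
      fun h hh h1 ↦ ?_⟩
    rw [hdiff, norm_smul, Real.norm_of_nonneg hh.le, mul_comm]
    gcongr
    exact (norm_sum_sum_pow_smul_le hh.le h1 _ _ _ _).trans (le_add_of_nonneg_left zero_le_one)

/-- properties of the rescaled drift matrices
`A_h = Σ_j Σ_{i ≤ min(κ, j+1)} h^{j+1-i} P_i A P_j`: for `h > 0`, `A_h = h S(1/h) A S(h)`,
`A_h − A_0 = h Σ_j Σ_{i ≤ j} h^{j-i} P_i A P_j`, and `‖A_h − A_0‖ ≤ C h` for `0 < h ≤ 1`. -/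
theorem rescaled_drift_properties (N κ : ℕ)
    (E : ℕ → Submodule ℝ (EuclideanSpace ℝ (Fin N)))
    (hspan : (⨆ i ∈ Finset.range (κ + 1), E i) = ⊤)
    (horth : ∀ i j, i ≠ j → i ≤ κ → j ≤ κ → ∀ x ∈ E i, ∀ y ∈ E j, ⟪x, y⟫ = 0)
    (P : ℕ → EuclideanSpace ℝ (Fin N) →L[ℝ] EuclideanSpace ℝ (Fin N))
    (hPmem : ∀ i x, P i x ∈ E i)
    (hPortho : ∀ i x, ∀ y ∈ E i, ⟪x - P i x, y⟫ = 0)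
    (AL : EuclideanSpace ℝ (Fin N) →L[ℝ] EuclideanSpace ℝ (Fin N))
    (hcompat : ∀ i j, j + 1 < i → i ≤ κ → j ≤ κ → P i * AL * P j = 0)
    (S : ℝ → EuclideanSpace ℝ (Fin N) →L[ℝ] EuclideanSpace ℝ (Fin N))
    (hS : ∀ r, S r = ∑ i ∈ Finset.range (κ + 1), r ^ i • P i)
    (A0 : EuclideanSpace ℝ (Fin N) →L[ℝ] EuclideanSpace ℝ (Fin N))
    (hA0 : A0 = ∑ j ∈ Finset.range κ, P (j + 1) * AL * P j)
    (Ah : ℝ → EuclideanSpace ℝ (Fin N) →L[ℝ] EuclideanSpace ℝ (Fin N))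
    (hAh : ∀ h, Ah h = ∑ j ∈ Finset.range (κ + 1), ∑ i ∈ Finset.range (min κ (j + 1) + 1),
      h ^ (j + 1 - i) • (P i * AL * P j)) :
    (∀ h : ℝ, 0 < h → Ah h = h • (S h⁻¹ * AL * S h)) ∧
    (∀ h : ℝ, Ah h - A0 =
      h • ∑ j ∈ Finset.range (κ + 1), ∑ i ∈ Finset.range (j + 1),
        h ^ (j - i) • (P i * AL * P j)) ∧
    (∃ C : ℝ, 0 < C ∧ ∀ h : ℝ, 0 < h → h ≤ 1 → ‖Ah h - A0‖ ≤ C * h) :=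
  rescaled_drift_properties_general N κ P AL hcompat S hS A0 hA0 Ah hAh
end

section
/- For the dilation D̃_r^γ(t,x) = (rt, r^γ S(r)x) and the group operation (τ,ζ) ⋄_h (t,x) := (τ + t, x + e^{t A_h} ζ), one has D̃_r^γ(τ,ζ) ⋄_h D̃_r^γ(t,x) = D̃_r^γ[(τ,ζ) ⋄_{hr}(t,x)] for all r > 0, h ≥ 0 and all (τ,ζ), (t,x) ∈ ℝ × ℝ^N. -/
open scoped RealInnerProductSpace

theorem semiconj_exp_aux {𝔸 : Type*} [NormedRing 𝔸] [NormedAlgebra ℝ 𝔸] [CompleteSpace 𝔸]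
    {B X Y : 𝔸} (h : SemiconjBy B X Y) :
    B * NormedSpace.exp X = NormedSpace.exp Y * B := by
  simp only [NormedSpace.exp_eq_tsum ℝ]
  rw [← (NormedSpace.expSeries_summable' (𝕂 := ℝ) X).tsum_mul_left B,
      ← (NormedSpace.expSeries_summable' (𝕂 := ℝ) Y).tsum_mul_right B]
  congr 1
  ext n
  rw [mul_smul_comm, smul_mul_assoc, (h.pow_right n).eq]

set_option maxHeartbeats 1000000 in
set_option synthInstance.maxHeartbeats 200000 in
/-- compatibility of the dilations with the group operation:
`D̃_r^γ (τ,ζ) ⋄_h D̃_r^γ (t,x) = D̃_r^γ [(τ,ζ) ⋄_{hr} (t,x)]`. -/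
theorem dilation_group_compatibility (N κ : ℕ)
    (E : ℕ → Submodule ℝ (EuclideanSpace ℝ (Fin N)))
    (hspan : (⨆ i ∈ Finset.range (κ + 1), E i) = ⊤)
    (horth : ∀ i j, i ≠ j → i ≤ κ → j ≤ κ → ∀ x ∈ E i, ∀ y ∈ E j, ⟪x, y⟫ = 0)
    (P : ℕ → EuclideanSpace ℝ (Fin N) →L[ℝ] EuclideanSpace ℝ (Fin N))
    (hPmem : ∀ i x, P i x ∈ E i)
    (hPortho : ∀ i x, ∀ y ∈ E i, ⟪x - P i x, y⟫ = 0)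
    (AL : EuclideanSpace ℝ (Fin N) →L[ℝ] EuclideanSpace ℝ (Fin N))
    (hcompat : ∀ i j, j + 1 < i → i ≤ κ → j ≤ κ → P i * AL * P j = 0)
    (S : ℝ → EuclideanSpace ℝ (Fin N) →L[ℝ] EuclideanSpace ℝ (Fin N))
    (hS : ∀ r, S r = ∑ i ∈ Finset.range (κ + 1), r ^ i • P i)
    (Ah : ℝ → EuclideanSpace ℝ (Fin N) →L[ℝ] EuclideanSpace ℝ (Fin N))
    (hAh : ∀ h, Ah h = ∑ j ∈ Finset.range (κ + 1), ∑ i ∈ Finset.range (min κ (j + 1) + 1),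
      h ^ (j + 1 - i) • (P i * AL * P j))
    (γ : ℝ)
    (Dt : ℝ → (ℝ × EuclideanSpace ℝ (Fin N)) → (ℝ × EuclideanSpace ℝ (Fin N)))
    (hDt : ∀ r p, Dt r p = (r * p.1, (r ^ γ • S r) p.2))
    (diam : ℝ → (ℝ × EuclideanSpace ℝ (Fin N)) → (ℝ × EuclideanSpace ℝ (Fin N)) →
      (ℝ × EuclideanSpace ℝ (Fin N)))
    (hdiam : ∀ h p q, diam h p q = (p.1 + q.1, q.2 + NormedSpace.exp (q.1 • Ah h) p.2)) :
    ∀ r : ℝ, 0 < r → ∀ h : ℝ, 0 ≤ h → ∀ p q : ℝ × EuclideanSpace ℝ (Fin N),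
      diam h (Dt r p) (Dt r q) = Dt r (diam (h * r) p q) := by
  have smulmul : ∀ (c : ℝ) (f g : EuclideanSpace ℝ (Fin N) →L[ℝ] EuclideanSpace ℝ (Fin N)),
      (c • f) * g = c • (f * g) := by
    intro c f g; ext x; simp [ContinuousLinearMap.mul_apply]
  have mulsmul : ∀ (c : ℝ) (f g : EuclideanSpace ℝ (Fin N) →L[ℝ] EuclideanSpace ℝ (Fin N)),
      f * (c • g) = c • (f * g) := by
    intro c f g; ext x; simp [ContinuousLinearMap.mul_apply]
  -- orthogonality of the projections
  have hPP : ∀ i j, i ≤ κ → j ≤ κ → P i * P j = if i = j then P j else 0 := by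
    intro i j hi hj
    by_cases hij : i = j
    · subst hij
      simp only [if_pos rfl]
      refine ContinuousLinearMap.ext fun x => ?_
      have hy : P i x ∈ E i := hPmem i x
      have h1 := hPortho i (P i x) (P i x - P i (P i x))
        (Submodule.sub_mem _ hy (hPmem i (P i x)))
      have h2 : P i x - P i (P i x) = 0 := by
        rwa [inner_self_eq_zero] at h1
      have h3 := sub_eq_zero.mp h2
      simpa [ContinuousLinearMap.mul_apply] using h3.symm
    · simp only [if_neg hij]
      refine ContinuousLinearMap.ext fun x => ?_
      have hy : P j x ∈ E j := hPmem j x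
      have hz : P i (P j x) ∈ E i := hPmem i (P j x)
      have h1 := hPortho i (P j x) (P i (P j x)) hz
      have h2 : ⟪P j x, P i (P j x)⟫ = 0 :=
        horth j i (fun hh => hij hh.symm) hj hi _ hy _ hz
      have h3 : ⟪P i (P j x), P i (P j x)⟫ = 0 := by
        have h4 := inner_sub_left (𝕜 := ℝ) (P j x) (P i (P j x)) (P i (P j x))
        rw [h1, h2] at h4
        linarith
      rw [inner_self_eq_zero] at h3
      simpa [ContinuousLinearMap.mul_apply] using h3
  -- S r * P i = r ^ i • P i for i ≤ κ
  have hSP : ∀ r : ℝ, ∀ i, i ≤ κ → S r * P i = r ^ i • P i := by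
    intro r i hi
    rw [hS, Finset.sum_mul]
    rw [Finset.sum_eq_single i]
    · rw [smulmul, hPP i i hi hi, if_pos rfl]
    · intro k hk hki
      rw [smulmul, hPP k i (Nat.lt_succ_iff.mp (Finset.mem_range.mp hk)) hi,
        if_neg hki]
      ext x; simp
    · intro hk
      exact absurd (Finset.mem_range.mpr (Nat.lt_succ_of_le hi)) hk
  -- P j * S r = r ^ j • P j for j ≤ κ
  have hPS : ∀ r : ℝ, ∀ j, j ≤ κ → P j * S r = r ^ j • P j := by
    intro r j hj
    rw [hS, Finset.mul_sum]
    rw [Finset.sum_eq_single j]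
    · rw [mulsmul, hPP j j hj hj, if_pos rfl]
    · intro k hk hkj
      rw [mulsmul, hPP j k hj (Nat.lt_succ_iff.mp (Finset.mem_range.mp hk)),
        if_neg fun hh => hkj hh.symm]
      ext x; simp
    · intro hk
      exact absurd (Finset.mem_range.mpr (Nat.lt_succ_of_le hj)) hk
  -- key algebraic identity
  have key : ∀ r h : ℝ, S r * Ah (h * r) = r • (Ah h * S r) := by
    intro r h
    rw [hAh, hAh, Finset.sum_mul, Finset.mul_sum, Finset.smul_sum]
    refine Finset.sum_congr rfl fun j hj => ?_
    rw [Finset.sum_mul, Finset.mul_sum, Finset.smul_sum]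
    refine Finset.sum_congr rfl fun i hi => ?_
    have hjκ : j ≤ κ := Nat.lt_succ_iff.mp (Finset.mem_range.mp hj)
    have hiκ : i ≤ min κ (j + 1) := Nat.lt_succ_iff.mp (Finset.mem_range.mp hi)
    have hij1 : i ≤ j + 1 := le_trans hiκ (min_le_right _ _)
    have hik : i ≤ κ := le_trans hiκ (min_le_left _ _)
    rw [mulsmul, smulmul]
    have lhs1 : S r * (P i * AL * P j) = r ^ i • (P i * AL * P j) := by
      rw [show S r * (P i * AL * P j) = (S r * P i) * AL * P j by
        rw [mul_assoc, mul_assoc, mul_assoc], hSP r i hik, smulmul, smulmul]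
    have rhs1 : P i * AL * P j * S r = r ^ j • (P i * AL * P j) := by
      rw [mul_assoc, hPS r j hjκ, mulsmul]
    rw [lhs1, rhs1, smul_smul, smul_smul, smul_smul]
    congr 1
    have hpow : r ^ (j + 1 - i) * r ^ i = r ^ (j + 1) := pow_sub_mul_pow r hij1
    calc (h * r) ^ (j + 1 - i) * r ^ i
        = h ^ (j + 1 - i) * (r ^ (j + 1 - i) * r ^ i) := by rw [mul_pow]; ring
      _ = h ^ (j + 1 - i) * r ^ (j + 1) := by rw [hpow]
      _ = h ^ (j + 1 - i) * (r ^ j * r) := by rw [pow_succ]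
      _ = r * h ^ (j + 1 - i) * r ^ j := by ring
  intro r hr h hh p q
  -- the semiconjugation and its exponential
  have hsemi : SemiconjBy (S r) (q.1 • Ah (h * r)) ((r * q.1) • Ah h) := by
    unfold SemiconjBy
    rw [mulsmul, key r h, smulmul, smul_smul, mul_comm q.1 r]
  have hexp := semiconj_exp_aux hsemi
  rw [hdiam, hdiam, hDt, hDt, hDt]
  refine Prod.ext ?_ ?_
  · show r * p.1 + r * q.1 = r * (p.1 + q.1)
    ring
  · show (r ^ γ • S r) q.2 + NormedSpace.exp ((r * q.1) • Ah h) ((r ^ γ • S r) p.2)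
      = (r ^ γ • S r) (q.2 + NormedSpace.exp (q.1 • Ah (h * r)) p.2)
    have happ : ∀ x, S r (NormedSpace.exp (q.1 • Ah (h * r)) x)
        = NormedSpace.exp ((r * q.1) • Ah h) (S r x) := by
      intro x
      have := congrArg (fun T => T x) hexp
      simpa [ContinuousLinearMap.mul_apply] using this
    simp only [ContinuousLinearMap.smul_apply, map_add, map_smul, happ]
end

section
/- For any h ∈ ℝ and r ≠ 0 and τ ∈ [0,1], the flow matrix satisfies e^{rτ A_h} = S(r)(e^{τ A_0} + R_A(τ; hr)) S(r)^{-1}, where R_A(τ; h) := Σ_{i=0}^κ Σ_{j=0}^κ Σ_{m = max(1, j−i)}^∞ h^m (τ^{m+i−j}/(m+i−j)!) P_i A^{m+i−j} P_j. -/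
open scoped RealInnerProductSpace


instance flowAux_isScalarTower (N : ℕ) :
    @IsScalarTower ℝ (EuclideanSpace ℝ (Fin N) →L[ℝ] EuclideanSpace ℝ (Fin N))
      (EuclideanSpace ℝ (Fin N) →L[ℝ] EuclideanSpace ℝ (Fin N))
      ContinuousLinearMap.instSMul instSMulOfMul ContinuousLinearMap.instSMul :=
  ⟨fun _ _ _ => ContinuousLinearMap.ext fun _ => rfl⟩

instance flowAux_smulCommClass (N : ℕ) :
    @SMulCommClass ℝ (EuclideanSpace ℝ (Fin N) →L[ℝ] EuclideanSpace ℝ (Fin N))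
      (EuclideanSpace ℝ (Fin N) →L[ℝ] EuclideanSpace ℝ (Fin N))
      ContinuousLinearMap.instSMul instSMulOfMul :=
  ⟨fun c f g => ContinuousLinearMap.ext fun v => (f.map_smul c (g v)).symm⟩

set_option maxHeartbeats 2000000 in
set_option synthInstance.maxHeartbeats 400000 in
/-- the flow representation `e^{rτ A_h} = S(r)(e^{τ A₀} + R_A(τ; hr)) S(r)⁻¹`
for `h ∈ ℝ`, `r ≠ 0`, `τ ∈ [0,1]`, with the remainder series `R_A`. -/
theorem flow_matrix_representation (N κ : ℕ)
    (E : ℕ → Submodule ℝ (EuclideanSpace ℝ (Fin N)))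
    (hspan : (⨆ i ∈ Finset.range (κ + 1), E i) = ⊤)
    (horth : ∀ i j, i ≠ j → i ≤ κ → j ≤ κ → ∀ x ∈ E i, ∀ y ∈ E j, ⟪x, y⟫ = 0)
    (P : ℕ → EuclideanSpace ℝ (Fin N) →L[ℝ] EuclideanSpace ℝ (Fin N))
    (hPmem : ∀ i x, P i x ∈ E i)
    (hPortho : ∀ i x, ∀ y ∈ E i, ⟪x - P i x, y⟫ = 0)
    (AL : EuclideanSpace ℝ (Fin N) →L[ℝ] EuclideanSpace ℝ (Fin N))
    (hcompat : ∀ i j l : ℕ, j + l < i → i ≤ κ → j ≤ κ → P i * AL ^ l * P j = 0)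
    (S : ℝ → EuclideanSpace ℝ (Fin N) →L[ℝ] EuclideanSpace ℝ (Fin N))
    (hS : ∀ r, S r = ∑ i ∈ Finset.range (κ + 1), r ^ i • P i)
    (A0 : EuclideanSpace ℝ (Fin N) →L[ℝ] EuclideanSpace ℝ (Fin N))
    (hA0 : A0 = ∑ j ∈ Finset.range κ, P (j + 1) * AL * P j)
    (Ah : ℝ → EuclideanSpace ℝ (Fin N) →L[ℝ] EuclideanSpace ℝ (Fin N))
    (hAh : ∀ h, Ah h = ∑ j ∈ Finset.range (κ + 1), ∑ i ∈ Finset.range (min κ (j + 1) + 1),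
      h ^ (j + 1 - i) • (P i * AL * P j))
    (RA : ℝ → ℝ → EuclideanSpace ℝ (Fin N) →L[ℝ] EuclideanSpace ℝ (Fin N))
    (hRA : ∀ τ h, RA τ h = ∑ i ∈ Finset.range (κ + 1), ∑ j ∈ Finset.range (κ + 1),
      ∑' m : ℕ, if max 1 (j - i) ≤ m then
        (h ^ m * τ ^ (m + i - j) / ((m + i - j).factorial : ℝ)) •
          (P i * AL ^ (m + i - j) * P j)
      else 0) :
    ∀ h : ℝ, ∀ r : ℝ, r ≠ 0 → ∀ τ ∈ Set.Icc (0 : ℝ) 1,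
      NormedSpace.exp ((r * τ) • Ah h) =
        S r * (NormedSpace.exp (τ • A0) + RA τ (h * r)) * S r⁻¹ := by
  -- pointwise projection facts
  have p1 : ∀ j, ∀ x ∈ E j, P j x = x := by
    intro j x hx
    have h := hPortho j x (x - P j x) (Submodule.sub_mem _ hx (hPmem j x))
    rw [inner_self_eq_zero, sub_eq_zero] at h
    exact h.symm
  have p2 : ∀ i j, i ≠ j → i ≤ κ → j ≤ κ → ∀ x ∈ E j, P i x = 0 := by
    intro i j hij hi hj x hx
    have h1 := hPortho i x (P i x) (hPmem i x)
    have h2 := horth j i (Ne.symm hij) hj hi x hx (P i x) (hPmem i x)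
    rw [inner_sub_left, h2, zero_sub, neg_eq_zero, inner_self_eq_zero] at h1
    exact h1
  have PPs : ∀ i, P i * P i = P i := fun i =>
    ContinuousLinearMap.ext fun x => by simpa using p1 i (P i x) (hPmem i x)
  have PPn : ∀ i j, i ≠ j → i ≤ κ → j ≤ κ → P i * P j = 0 := fun i j hij hi hj =>
    ContinuousLinearMap.ext fun x => by simpa using p2 i j hij hi hj (P j x) (hPmem j x)
  -- resolution of identity
  have key : ∀ x, (∑ i ∈ Finset.range (κ + 1), P i) x = x := by
    have hle : (⨆ i ∈ Finset.range (κ + 1), E i) ≤ LinearMap.ker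
        (((∑ i ∈ Finset.range (κ + 1), P i) - 1
          : EuclideanSpace ℝ (Fin N) →L[ℝ] EuclideanSpace ℝ (Fin N)) : EuclideanSpace ℝ (Fin N) →ₗ[ℝ] EuclideanSpace ℝ (Fin N)) := by
      refine iSup_le fun j => iSup_le fun hj => ?_
      intro x hx
      rw [LinearMap.mem_ker, ContinuousLinearMap.coe_coe]
      have hj' : j ≤ κ := Nat.lt_succ_iff.mp (Finset.mem_range.mp hj)
      have hsum : (∑ i ∈ Finset.range (κ + 1), P i) x = x := by
        rw [ContinuousLinearMap.sum_apply]
        rw [Finset.sum_eq_single_of_mem j hj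
          (fun i hi hij => p2 i j hij (Nat.lt_succ_iff.mp (Finset.mem_range.mp hi)) hj' x hx)]
        exact p1 j x hx
      rw [ContinuousLinearMap.sub_apply, hsum, ContinuousLinearMap.one_apply, sub_self]
    intro x
    have hx : x ∈ LinearMap.ker (((∑ i ∈ Finset.range (κ + 1), P i) - 1
        : EuclideanSpace ℝ (Fin N) →L[ℝ] EuclideanSpace ℝ (Fin N)) : EuclideanSpace ℝ (Fin N) →ₗ[ℝ] EuclideanSpace ℝ (Fin N)) :=
      hle (by rw [hspan]; exact Submodule.mem_top)
    rw [LinearMap.mem_ker, ContinuousLinearMap.coe_coe, ContinuousLinearMap.sub_apply, ContinuousLinearMap.one_apply,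
      sub_eq_zero] at hx
    exact hx
  have Psum : (∑ i ∈ Finset.range (κ + 1), P i) = 1 := by
    apply ContinuousLinearMap.ext
    intro x
    rw [ContinuousLinearMap.one_apply]
    exact key x
  have smulMul : ∀ (c : ℝ) (X Y : EuclideanSpace ℝ (Fin N) →L[ℝ] EuclideanSpace ℝ (Fin N)),
      (c • X) * Y = c • (X * Y) := fun c X Y => ContinuousLinearMap.ext fun v => rfl
  have mulSmul : ∀ (c : ℝ) (X Y : EuclideanSpace ℝ (Fin N) →L[ℝ] EuclideanSpace ℝ (Fin N)),
      X * (c • Y) = c • (X * Y) := fun c X Y => ContinuousLinearMap.ext fun v => by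
    simp [ContinuousLinearMap.mul_apply, ContinuousLinearMap.smul_apply, map_smul]
  have opSmulZero : ∀ (c : ℝ),
      c • (0 : EuclideanSpace ℝ (Fin N) →L[ℝ] EuclideanSpace ℝ (Fin N)) = 0 := fun c =>
    ContinuousLinearMap.ext fun v => by simp
  have opZeroSmul : ∀ X : EuclideanSpace ℝ (Fin N) →L[ℝ] EuclideanSpace ℝ (Fin N),
      (0 : ℝ) • X = 0 := fun X => ContinuousLinearMap.ext fun v => by simp
  have smulpow : ∀ (c : ℝ) (X : EuclideanSpace ℝ (Fin N) →L[ℝ] EuclideanSpace ℝ (Fin N)) (m : ℕ),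
      (c • X) ^ m = c ^ m • X ^ m := by
    intro c X m
    induction m with
    | zero => simp
    | succ m ih =>
      rw [pow_succ, ih, smulMul, mulSmul, smul_smul, ← pow_succ,
        ← pow_succ]
  -- S multiplication facts
  have SP : ∀ s : ℝ, ∀ i, i ≤ κ → S s * P i = s ^ i • P i := by
    intro s i hi
    rw [hS s, Finset.sum_mul]
    rw [Finset.sum_eq_single_of_mem i (Finset.mem_range.mpr (Nat.lt_succ_of_le hi))]
    · rw [smulMul, PPs]
    · intro j hj hji
      rw [smulMul, PPn j i hji (Nat.lt_succ_iff.mp (Finset.mem_range.mp hj)) hi,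
        opSmulZero]
  have PS : ∀ s : ℝ, ∀ i, i ≤ κ → P i * S s = s ^ i • P i := by
    intro s i hi
    rw [hS s, Finset.mul_sum]
    rw [Finset.sum_eq_single_of_mem i (Finset.mem_range.mpr (Nat.lt_succ_of_le hi))]
    · rw [mulSmul, PPs]
    · intro j hj hji
      rw [mulSmul, PPn i j (Ne.symm hji) hi (Nat.lt_succ_iff.mp (Finset.mem_range.mp hj)),
        opSmulZero]
  have SS : ∀ u v : ℝ, u * v = 1 → S u * S v = 1 := by
    intro u v huv
    rw [hS v, Finset.mul_sum]
    have hterms : ∀ j ∈ Finset.range (κ + 1), S u * (v ^ j • P j) = P j := by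
      intro j hj
      rw [mulSmul, SP u j (Nat.lt_succ_iff.mp (Finset.mem_range.mp hj)), smul_smul,
        ← mul_pow, mul_comm v u, huv, one_pow, one_smul]
    rw [Finset.sum_congr rfl hterms, Psum]
  -- sandwich conjugation identities
  have PXP : ∀ (s t : ℝ) (i j : ℕ), i ≤ κ → j ≤ κ →
      ∀ X : EuclideanSpace ℝ (Fin N) →L[ℝ] EuclideanSpace ℝ (Fin N),
      P i * (S s * X * S t) * P j = (s ^ i * t ^ j) • (P i * X * P j) := by
    intro s t i j hi hj X
    have e1 : P i * (S s * X * S t) * P j = (P i * S s) * X * (S t * P j) := by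
      simp only [mul_assoc]
    rw [e1, PS s i hi, SP t j hj, smulMul, smulMul, mulSmul, smul_smul]
  have SPXPS : ∀ (s t : ℝ) (i j : ℕ), i ≤ κ → j ≤ κ →
      ∀ X : EuclideanSpace ℝ (Fin N) →L[ℝ] EuclideanSpace ℝ (Fin N),
      S s * (P i * X * P j) * S t = (s ^ i * t ^ j) • (P i * X * P j) := by
    intro s t i j hi hj X
    have e1 : S s * (P i * X * P j) * S t = (S s * P i) * X * (P j * S t) := by
      simp only [mul_assoc]
    rw [e1, SP s i hi, PS t j hj, smulMul, smulMul, mulSmul, smul_smul]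
  -- exp sandwich expansion
  have sandwich : ∀ a b x : EuclideanSpace ℝ (Fin N) →L[ℝ] EuclideanSpace ℝ (Fin N),
      a * NormedSpace.exp x * b
        = ∑' m : ℕ, ((m.factorial : ℝ))⁻¹ • (a * x ^ m * b) := by
    intro a b x
    have hsum := NormedSpace.expSeries_summable' (𝕂 := ℝ) x
    have hmap := (ContinuousLinearMap.mulLeftRight ℝ
      (EuclideanSpace ℝ (Fin N) →L[ℝ] EuclideanSpace ℝ (Fin N)) a b).map_tsum hsum
    simp only [NormedSpace.exp_eq_tsum ℝ]
    calc a * (∑' n : ℕ, ((n.factorial : ℝ))⁻¹ • x ^ n) * b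
        = ContinuousLinearMap.mulLeftRight ℝ _ a b
            (∑' n : ℕ, ((n.factorial : ℝ))⁻¹ • x ^ n) := rfl
      _ = ∑' m : ℕ, ((m.factorial : ℝ))⁻¹ • (a * x ^ m * b) := by
          rw [hmap]
          exact tsum_congr fun m => by
            rw [map_smul, ContinuousLinearMap.mulLeftRight_apply]
  -- A0 structure
  have A0P : ∀ j, j ≤ κ → A0 * P j = if j < κ then P (j + 1) * AL * P j else 0 := by
    intro j hj
    rw [hA0, Finset.sum_mul]
    by_cases hjκ : j < κ
    · rw [if_pos hjκ]
      rw [Finset.sum_eq_single_of_mem j (Finset.mem_range.mpr hjκ)]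
      · have e : P (j + 1) * AL * P j * P j = P (j + 1) * AL * (P j * P j) := by
          simp only [mul_assoc]
        rw [e, PPs]
      · intro k hk hkj
        have e : P (k + 1) * AL * P k * P j = P (k + 1) * AL * (P k * P j) := by
          simp only [mul_assoc]
        rw [e, PPn k j hkj (le_of_lt (Finset.mem_range.mp hk)) hj, mul_zero]
    · rw [if_neg hjκ]
      apply Finset.sum_eq_zero
      intro k hk
      have hk' := Finset.mem_range.mp hk
      have e : P (k + 1) * AL * P k * P j = P (k + 1) * AL * (P k * P j) := by
        simp only [mul_assoc]
      rw [e, PPn k j (by omega) (by omega) hj, mul_zero]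
  have insertId : ∀ m j, j + m + 1 ≤ κ →
      P (j + m + 1) * AL ^ m * P (j + 1) * AL * P j = P (j + m + 1) * AL ^ (m + 1) * P j := by
    intro m j hjm
    have expand : P (j + m + 1) * AL ^ (m + 1) * P j
        = ∑ k ∈ Finset.range (κ + 1), P (j + m + 1) * AL ^ m * P k * AL * P j := by
      calc P (j + m + 1) * AL ^ (m + 1) * P j
          = P (j + m + 1) * AL ^ m * (∑ k ∈ Finset.range (κ + 1), P k) * AL * P j := by
            rw [Psum, mul_one, pow_succ]
            simp only [mul_assoc]
        _ = ∑ k ∈ Finset.range (κ + 1), P (j + m + 1) * AL ^ m * P k * AL * P j := by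
            rw [Finset.mul_sum, Finset.sum_mul, Finset.sum_mul]
    have single : ∑ k ∈ Finset.range (κ + 1), P (j + m + 1) * AL ^ m * P k * AL * P j
        = P (j + m + 1) * AL ^ m * P (j + 1) * AL * P j := by
      apply Finset.sum_eq_single_of_mem (j + 1) (Finset.mem_range.mpr (by omega))
      intro k hk hkj
      have hk' := Finset.mem_range.mp hk
      rcases lt_or_gt_of_ne hkj with hlt | hgt
      · have h0 : P (j + m + 1) * AL ^ m * P k = 0 :=
          hcompat (j + m + 1) k m (by omega) hjm (by omega)
        rw [h0, zero_mul, zero_mul]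
      · have h0 : P k * AL * P j = 0 := by
          have := hcompat k j 1 (by omega) (by omega) (by omega)
          rwa [pow_one] at this
        have e : P (j + m + 1) * AL ^ m * P k * AL * P j
            = P (j + m + 1) * AL ^ m * (P k * AL * P j) := by
          simp only [mul_assoc]
        rw [e, h0, mul_zero]
    exact single.symm.trans expand.symm
  have A0pow : ∀ m : ℕ, ∀ j, j ≤ κ →
      A0 ^ m * P j = if j + m ≤ κ then P (j + m) * AL ^ m * P j else 0 := by
    intro m
    induction m with
    | zero =>
      intro j hj
      rw [if_pos (by omega)]
      simp only [pow_zero, one_mul, mul_one, Nat.add_zero]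
      exact (PPs j).symm
    | succ m ih =>
      intro j hj
      rw [pow_succ, mul_assoc, A0P j hj]
      by_cases hjκ : j < κ
      · rw [if_pos hjκ]
        have e : A0 ^ m * (P (j + 1) * AL * P j) = A0 ^ m * P (j + 1) * AL * P j := by
          simp only [mul_assoc]
        rw [e, ih (j + 1) hjκ]
        by_cases h2 : j + 1 + m ≤ κ
        · rw [if_pos h2, if_pos (by omega : j + (m + 1) ≤ κ)]
          have hins := insertId m j (by omega)
          rw [show j + 1 + m = j + m + 1 from by omega, show j + (m + 1) = j + m + 1 from by omega]
          exact hins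
        · rw [if_neg h2, if_neg (by omega), zero_mul, zero_mul]
      · rw [if_neg hjκ, mul_zero, if_neg (by omega)]
  have PA0P : ∀ (m i j : ℕ), i ≤ κ → j ≤ κ →
      P i * A0 ^ m * P j = if i = j + m then P i * AL ^ m * P j else 0 := by
    intro m i j hi hj
    have e0 : P i * A0 ^ m * P j = P i * (A0 ^ m * P j) := by rw [mul_assoc]
    rw [e0, A0pow m j hj]
    by_cases h2 : j + m ≤ κ
    · rw [if_pos h2]
      by_cases h3 : i = j + m
      · rw [if_pos h3]
        subst h3
        have e : P (j + m) * (P (j + m) * AL ^ m * P j) = P (j + m) * P (j + m) * AL ^ m * P j := by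
          simp only [mul_assoc]
        rw [e, PPs]
      · rw [if_neg h3]
        have e : P i * (P (j + m) * AL ^ m * P j) = P i * P (j + m) * AL ^ m * P j := by
          simp only [mul_assoc]
        rw [e, PPn i (j + m) h3 hi h2, zero_mul, zero_mul]
    · rw [if_neg h2, mul_zero, if_neg (by omega)]
  -- Ah as a conjugation for g ≠ 0
  have SXS : ∀ (s t : ℝ) (X : EuclideanSpace ℝ (Fin N) →L[ℝ] EuclideanSpace ℝ (Fin N)),
      S s * X * S t = ∑ j ∈ Finset.range (κ + 1), ∑ i ∈ Finset.range (κ + 1),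
        (s ^ i * t ^ j) • (P i * X * P j) := by
    intro s t X
    rw [hS s, hS t, Finset.sum_mul, Finset.sum_mul]
    rw [Finset.sum_comm]
    refine Finset.sum_congr rfl fun j hj => ?_
    rw [Finset.mul_sum]
    refine Finset.sum_congr rfl fun i hi => ?_
    rw [smulMul, smulMul, mulSmul, smul_smul]
  have AhRep : ∀ g : ℝ, g ≠ 0 → Ah g = g • (S g⁻¹ * AL * S g) := by
    intro g hg
    rw [SXS g⁻¹ g AL, Finset.smul_sum, hAh g]
    refine Finset.sum_congr rfl fun j hj => ?_
    have hj' : j ≤ κ := Nat.lt_succ_iff.mp (Finset.mem_range.mp hj)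
    rw [Finset.smul_sum]
    have hsub : Finset.range (min κ (j + 1) + 1) ⊆ Finset.range (κ + 1) :=
      Finset.range_subset_range.mpr (by omega)
    calc ∑ i ∈ Finset.range (min κ (j + 1) + 1), g ^ (j + 1 - i) • (P i * AL * P j)
        = ∑ i ∈ Finset.range (min κ (j + 1) + 1),
            g • ((g⁻¹ ^ i * g ^ j) • (P i * AL * P j)) := by
          refine Finset.sum_congr rfl fun i hi => ?_
          rw [smul_smul]
          congr 1
          have hi' : i ≤ j + 1 := by have := Finset.mem_range.mp hi; omega
          obtain ⟨k, hk⟩ := Nat.le.dest hi'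
          rw [show j + 1 - i = k from by omega, inv_pow]
          have e : g * ((g ^ i)⁻¹ * g ^ j) = (g ^ i)⁻¹ * (g ^ i * g ^ k) := by
            rw [← pow_add, hk, pow_succ]
            ring
          rw [e, ← mul_assoc, inv_mul_cancel₀ (pow_ne_zero i hg), one_mul]
      _ = ∑ i ∈ Finset.range (κ + 1), g • ((g⁻¹ ^ i * g ^ j) • (P i * AL * P j)) := by
          apply Finset.sum_subset hsub
          intro i hiK hni
          have hi' := Finset.mem_range.mp hiK
          have hni' : min κ (j + 1) + 1 ≤ i := by
            by_contra hcon
            exact hni (Finset.mem_range.mpr (by omega))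
          have h0 : P i * AL * P j = 0 := by
            have := hcompat i j 1 (by omega) (by omega) hj'
            rwa [pow_one] at this
          rw [h0, opSmulZero, opSmulZero]
  -- the core identity: exp (τ • Ah g) = exp (τ • A0) + RA τ g
  have core : ∀ g τ : ℝ, NormedSpace.exp (τ • Ah g)
      = NormedSpace.exp (τ • A0) + RA τ g := by
    intro g τ
    by_cases hg : g = 0
    · subst hg
      have Ah0 : Ah 0 = A0 := by
        rw [hAh 0, hA0, Finset.sum_range_succ]
        have last : ∑ i ∈ Finset.range (min κ (κ + 1) + 1),
            (0 : ℝ) ^ (κ + 1 - i) • (P i * AL * P κ) = 0 := by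
          apply Finset.sum_eq_zero
          intro i hi
          have hi' := Finset.mem_range.mp hi
          rw [zero_pow (by omega), opZeroSmul]
        rw [last, add_zero]
        refine Finset.sum_congr rfl fun j hj => ?_
        have hjκ : j < κ := Finset.mem_range.mp hj
        rw [show min κ (j + 1) = j + 1 from by omega]
        rw [Finset.sum_range_succ]
        have zeros : ∑ i ∈ Finset.range (j + 1), (0 : ℝ) ^ (j + 1 - i) • (P i * AL * P j) = 0 := by
          apply Finset.sum_eq_zero
          intro i hi
          have hi' := Finset.mem_range.mp hi
          rw [zero_pow (by omega), opZeroSmul]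
        rw [zeros, zero_add, Nat.sub_self, pow_zero, one_smul]
      have RA0 : RA τ 0 = 0 := by
        rw [hRA]
        refine Finset.sum_eq_zero fun i _ => Finset.sum_eq_zero fun j _ => ?_
        have hz : ∀ m : ℕ, (if max 1 (j - i) ≤ m then
            ((0 : ℝ) ^ m * τ ^ (m + i - j) / ((m + i - j).factorial : ℝ)) •
              (P i * AL ^ (m + i - j) * P j) else 0) = 0 := by
          intro m
          by_cases hm : max 1 (j - i) ≤ m
          · rw [if_pos hm, zero_pow (by simp only [Nat.max_le] at hm; omega), zero_mul,
              zero_div, opZeroSmul]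
          · rw [if_neg hm]
        rw [tsum_congr hz, tsum_zero]
      rw [Ah0, RA0, add_zero]
    · -- g ≠ 0
      have expconj : NormedSpace.exp (τ • Ah g)
          = S g⁻¹ * NormedSpace.exp ((τ * g) • AL) * S g := by
        have hU1 : S g⁻¹ * S g = 1 := SS g⁻¹ g (inv_mul_cancel₀ hg)
        have hU2 : S g * S g⁻¹ = 1 := SS g g⁻¹ (mul_inv_cancel₀ hg)
        let U : (EuclideanSpace ℝ (Fin N) →L[ℝ] EuclideanSpace ℝ (Fin N))ˣ :=
          ⟨S g⁻¹, S g, hU1, hU2⟩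
        have h1 : τ • Ah g = (U : EuclideanSpace ℝ (Fin N) →L[ℝ] EuclideanSpace ℝ (Fin N))
            * ((τ * g) • AL) * ((U⁻¹ : _ˣ) : EuclideanSpace ℝ (Fin N) →L[ℝ] EuclideanSpace ℝ (Fin N)) := by
          show τ • Ah g = S g⁻¹ * ((τ * g) • AL) * S g
          rw [AhRep g hg, smul_smul, mulSmul, smulMul]
        letI : NormedAlgebra ℚ (EuclideanSpace ℝ (Fin N) →L[ℝ] EuclideanSpace ℝ (Fin N)) :=
          NormedAlgebra.restrictScalars ℚ ℝ _
        rw [h1, NormedSpace.exp_units_conj]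
        rfl
      -- block decomposition
      have decomp : ∀ X : EuclideanSpace ℝ (Fin N) →L[ℝ] EuclideanSpace ℝ (Fin N),
          X = ∑ i ∈ Finset.range (κ + 1), ∑ j ∈ Finset.range (κ + 1), P i * X * P j := by
        intro X
        calc X = (∑ i ∈ Finset.range (κ + 1), P i) * X * (∑ j ∈ Finset.range (κ + 1), P j) := by
              rw [Psum, one_mul, mul_one]
          _ = ∑ i ∈ Finset.range (κ + 1), ∑ j ∈ Finset.range (κ + 1), P i * X * P j := by
              rw [Finset.sum_mul, Finset.sum_mul]
              exact Finset.sum_congr rfl fun i _ => by rw [Finset.mul_sum]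
      -- per-block identity
      have block : ∀ i j : ℕ, i ≤ κ → j ≤ κ →
          P i * (S g⁻¹ * NormedSpace.exp ((τ * g) • AL) * S g) * P j
            = P i * NormedSpace.exp (τ • A0) * P j
              + ∑' m : ℕ, (if max 1 (j - i) ≤ m then
                  (g ^ m * τ ^ (m + i - j) / ((m + i - j).factorial : ℝ)) •
                    (P i * AL ^ (m + i - j) * P j)
                else 0) := by
        intro i j hi hj
        have hsumf' : Summable (fun m : ℕ =>
            (((m.factorial : ℝ))⁻¹ * (τ * g) ^ m) • (P i * AL ^ m * P j)) := by
          have h0 := NormedSpace.expSeries_summable' (𝕂 := ℝ) ((τ * g) • AL)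
          have h1 := h0.mapL (ContinuousLinearMap.mulLeftRight ℝ
            (EuclideanSpace ℝ (Fin N) →L[ℝ] EuclideanSpace ℝ (Fin N)) (P i) (P j))
          refine h1.congr fun m => ?_
          rw [map_smul, ContinuousLinearMap.mulLeftRight_apply, smulpow, mulSmul,
            smulMul, smul_smul]
        have hf : Summable (fun m : ℕ =>
            ((g⁻¹ ^ i * g ^ j) * (((m.factorial : ℝ))⁻¹ * (τ * g) ^ m)) •
              (P i * AL ^ m * P j)) :=
          (hsumf'.const_smul (g⁻¹ ^ i * g ^ j)).congr fun m => smul_smul _ _ _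
        have lhs_eq : P i * (S g⁻¹ * NormedSpace.exp ((τ * g) • AL) * S g) * P j
            = ∑' m : ℕ, ((g⁻¹ ^ i * g ^ j) * (((m.factorial : ℝ))⁻¹ * (τ * g) ^ m)) •
                (P i * AL ^ m * P j) := by
          rw [PXP g⁻¹ g i j hi hj, sandwich (P i) (P j) ((τ * g) • AL)]
          have hfs : ∀ m : ℕ, ((m.factorial : ℝ))⁻¹ • (P i * ((τ * g) • AL) ^ m * P j)
              = (((m.factorial : ℝ))⁻¹ * (τ * g) ^ m) • (P i * AL ^ m * P j) := by
            intro m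
            rw [smulpow, mulSmul, smulMul, smul_smul]
          rw [tsum_congr hfs, ← Summable.tsum_const_smul _ hsumf']
          exact tsum_congr fun m => smul_smul _ _ _
        -- expansion of the A0 block
        have hterm : ∀ m : ℕ, ((m.factorial : ℝ))⁻¹ • (P i * (τ • A0) ^ m * P j)
            = (((m.factorial : ℝ))⁻¹ * τ ^ m) •
                (if i = j + m then P i * AL ^ m * P j else 0) := by
          intro m
          rw [smulpow, mulSmul, smulMul, smul_smul, PA0P m i j hi hj]
        rcases le_or_gt j i with hji | hij
        · -- case j ≤ i
          obtain ⟨d, rfl⟩ := Nat.le.dest hji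
          have EAblock : P (j + d) * NormedSpace.exp (τ • A0) * P j
              = (((d.factorial : ℝ))⁻¹ * τ ^ d) • (P (j + d) * AL ^ d * P j) := by
            rw [sandwich (P (j + d)) (P j) (τ • A0), tsum_congr hterm,
              tsum_eq_single d (fun m hm => by rw [if_neg (by omega), opSmulZero]),
              if_pos rfl]
          rw [lhs_eq, EAblock]
          set f : ℕ → EuclideanSpace ℝ (Fin N) →L[ℝ] EuclideanSpace ℝ (Fin N) :=
            fun m => ((g⁻¹ ^ (j + d) * g ^ j) * (((m.factorial : ℝ))⁻¹ * (τ * g) ^ m)) •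
              (P (j + d) * AL ^ m * P j) with hfdef
          set T : ℕ → EuclideanSpace ℝ (Fin N) →L[ℝ] EuclideanSpace ℝ (Fin N) :=
            fun m => if max 1 (j - (j + d)) ≤ m then
              (g ^ m * τ ^ (m + (j + d) - j) / ((m + (j + d) - j).factorial : ℝ)) •
                (P (j + d) * AL ^ (m + (j + d) - j) * P j)
            else 0 with hTdef
          have hfT : ∀ n : ℕ, T (n + 1) = f (n + (d + 1)) := by
            intro n
            simp only [hTdef, hfdef]
            rw [if_pos (by simp only [Nat.max_le]; omega)]
            rw [show n + 1 + (j + d) - j = n + (d + 1) from by omega]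
            rw [div_eq_mul_inv]
            congr 1
            have hkey : (g ^ (j + d))⁻¹ * (g ^ j * g ^ (n + (d + 1))) = g ^ (n + 1) := by
              have h1 : g ^ j * g ^ (n + (d + 1)) = g ^ (n + 1) * g ^ (j + d) := by
                rw [← pow_add, ← pow_add]
                congr 1
                omega
              rw [h1, mul_comm (g ^ (n + 1)), ← mul_assoc,
                inv_mul_cancel₀ (pow_ne_zero _ hg), one_mul]
            rw [inv_pow, mul_pow]
            linear_combination (-(τ ^ (n + (d + 1)) * (((n + (d + 1)).factorial : ℝ))⁻¹)) * hkey
          have hT1 : Summable (fun n => T (n + 1)) :=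
            ((summable_nat_add_iff (d + 1)).2 hf).congr fun n => (hfT n).symm
          have hTs : Summable T := (summable_nat_add_iff 1).1 hT1
          have hfd : f d = (((d.factorial : ℝ))⁻¹ * τ ^ d) • (P (j + d) * AL ^ d * P j) := by
            simp only [hfdef]
            congr 1
            have hkey : (g ^ (j + d))⁻¹ * (g ^ j * g ^ d) = 1 := by
              rw [← pow_add, inv_mul_cancel₀ (pow_ne_zero _ hg)]
            rw [inv_pow, mul_pow]
            linear_combination ((((d.factorial : ℝ))⁻¹ * τ ^ d)) * hkey
          calc ∑' m, f m
              = (∑ m ∈ Finset.range (d + 1), f m) + ∑' m, f (m + (d + 1)) :=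
                (Summable.sum_add_tsum_nat_add (d + 1) hf).symm
            _ = f d + ∑' n, T (n + 1) := by
                rw [Finset.sum_eq_single_of_mem d (Finset.self_mem_range_succ d)
                  (fun m hm hmd => by
                    have hm' := Finset.mem_range.mp hm
                    simp only [hfdef]
                    rw [hcompat (j + d) j m (by omega) hi hj, opSmulZero])]
                rw [tsum_congr (fun n => (hfT n).symm)]
            _ = (((d.factorial : ℝ))⁻¹ * τ ^ d) • (P (j + d) * AL ^ d * P j) + ∑' m, T m := by
                rw [hfd]
                congr 1
                have hsplit := Summable.sum_add_tsum_nat_add 1 hTs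
                rw [← hsplit, Finset.sum_range_one]
                rw [show T 0 = 0 from by
                  simp only [hTdef]
                  exact if_neg (by simp only [Nat.max_le]; omega), zero_add]
        · -- case i < j
          obtain ⟨e, rfl⟩ := Nat.exists_eq_add_of_lt hij
          have EAblock : P i * NormedSpace.exp (τ • A0) * P (i + e + 1) = 0 := by
            rw [sandwich (P i) (P (i + e + 1)) (τ • A0), tsum_congr hterm]
            have hz : ∀ m : ℕ, (((m.factorial : ℝ))⁻¹ * τ ^ m) •
                (if i = i + e + 1 + m then P i * AL ^ m * P (i + e + 1) else 0) = 0 := by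
              intro m
              rw [if_neg (by omega), opSmulZero]
            rw [tsum_congr hz, tsum_zero]
          rw [lhs_eq, EAblock, zero_add]
          set f : ℕ → EuclideanSpace ℝ (Fin N) →L[ℝ] EuclideanSpace ℝ (Fin N) :=
            fun m => ((g⁻¹ ^ i * g ^ (i + e + 1)) * (((m.factorial : ℝ))⁻¹ * (τ * g) ^ m)) •
              (P i * AL ^ m * P (i + e + 1)) with hfdef
          set T : ℕ → EuclideanSpace ℝ (Fin N) →L[ℝ] EuclideanSpace ℝ (Fin N) :=
            fun m => if max 1 (i + e + 1 - i) ≤ m then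
              (g ^ m * τ ^ (m + i - (i + e + 1)) / ((m + i - (i + e + 1)).factorial : ℝ)) •
                (P i * AL ^ (m + i - (i + e + 1)) * P (i + e + 1))
            else 0 with hTdef
          have hfT : ∀ n : ℕ, T (n + (e + 1)) = f n := by
            intro n
            simp only [hTdef, hfdef]
            rw [if_pos (by simp only [Nat.max_le]; omega)]
            rw [show n + (e + 1) + i - (i + e + 1) = n from by omega]
            rw [div_eq_mul_inv]
            congr 1
            have hkey : (g ^ i)⁻¹ * (g ^ (i + e + 1) * g ^ n) = g ^ (n + (e + 1)) := by
              have h1 : g ^ (i + e + 1) * g ^ n = g ^ (n + (e + 1)) * g ^ i := by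
                rw [← pow_add, ← pow_add]
                congr 1
                omega
              rw [h1, mul_comm (g ^ (n + (e + 1))), ← mul_assoc,
                inv_mul_cancel₀ (pow_ne_zero _ hg), one_mul]
            rw [inv_pow, mul_pow]
            linear_combination (-(τ ^ n * ((n.factorial : ℝ))⁻¹)) * hkey
          have hTs : Summable T :=
            (summable_nat_add_iff (e + 1)).1 (hf.congr fun n => (hfT n).symm)
          rw [← Summable.sum_add_tsum_nat_add (e + 1) hTs]
          rw [Finset.sum_eq_zero (fun n hn => by
            have hn' := Finset.mem_range.mp hn
            simp only [hTdef]
            exact if_neg (by simp only [Nat.max_le]; omega)), zero_add]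
          exact tsum_congr fun n => (hfT n).symm
      -- assemble
      rw [expconj, hRA]
      conv_lhs => rw [decomp (S g⁻¹ * NormedSpace.exp ((τ * g) • AL) * S g)]
      conv_rhs => rw [decomp (NormedSpace.exp (τ • A0))]
      rw [← Finset.sum_add_distrib]
      refine Finset.sum_congr rfl fun i hi => ?_
      rw [← Finset.sum_add_distrib]
      refine Finset.sum_congr rfl fun j hj => ?_
      exact block i j (Nat.lt_succ_iff.mp (Finset.mem_range.mp hi))
        (Nat.lt_succ_iff.mp (Finset.mem_range.mp hj))
  -- conjugation of Ah by S r
  have conj2 : ∀ b r : ℝ, r ≠ 0 → r • Ah b = S r * Ah (b * r) * S r⁻¹ := by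
    intro b r hr
    rw [hAh b, hAh (b * r), Finset.smul_sum, Finset.mul_sum, Finset.sum_mul]
    refine Finset.sum_congr rfl fun j hj => ?_
    have hj' : j ≤ κ := Nat.lt_succ_iff.mp (Finset.mem_range.mp hj)
    rw [Finset.smul_sum, Finset.mul_sum, Finset.sum_mul]
    refine Finset.sum_congr rfl fun i hi => ?_
    have hi' : i ≤ κ := by have := Finset.mem_range.mp hi; omega
    have hij : i ≤ j + 1 := by have := Finset.mem_range.mp hi; omega
    rw [mulSmul, smulMul, SPXPS r r⁻¹ i j hi' hj' AL, smul_smul, smul_smul]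
    congr 1
    obtain ⟨k, hk⟩ := Nat.le.dest hij
    rw [show j + 1 - i = k from by omega, mul_pow, inv_pow]
    have hkey : r ^ i * (r ^ j)⁻¹ * r ^ k = r := by
      have h1 : r ^ i * r ^ k = r ^ j * r := by rw [← pow_add, hk, pow_succ]
      field_simp
      linear_combination h1
    linear_combination (-(b ^ k)) * hkey
  -- final assembly
  intro b r hr τ hτ
  have hU1 : S r * S r⁻¹ = 1 := SS r r⁻¹ (mul_inv_cancel₀ hr)
  have hU2 : S r⁻¹ * S r = 1 := SS r⁻¹ r (inv_mul_cancel₀ hr)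
  let U : (EuclideanSpace ℝ (Fin N) →L[ℝ] EuclideanSpace ℝ (Fin N))ˣ := ⟨S r, S r⁻¹, hU1, hU2⟩
  have conj1 : (r * τ) • Ah b = (U : EuclideanSpace ℝ (Fin N) →L[ℝ] EuclideanSpace ℝ (Fin N))
      * (τ • Ah (b * r)) * ((U⁻¹ : _ˣ) : EuclideanSpace ℝ (Fin N) →L[ℝ] EuclideanSpace ℝ (Fin N)) := by
    show (r * τ) • Ah b = S r * (τ • Ah (b * r)) * S r⁻¹
    calc (r * τ) • Ah b = τ • (r • Ah b) := by rw [smul_smul, mul_comm]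
      _ = τ • (S r * Ah (b * r) * S r⁻¹) := by rw [conj2 b r hr]
      _ = S r * (τ • Ah (b * r)) * S r⁻¹ := by rw [mulSmul, smulMul]
  letI : NormedAlgebra ℚ (EuclideanSpace ℝ (Fin N) →L[ℝ] EuclideanSpace ℝ (Fin N)) :=
    NormedAlgebra.restrictScalars ℚ ℝ _
  rw [conj1, NormedSpace.exp_units_conj, core (b * r) τ]
  rfl
end

section
/- The remainder operator norm bound: for R_A(τ;h) defined by the series Σ_{i,j} Σ_{m ≥ max(1,j−i)} h^m τ^{m+i−j}/(m+i−j)! P_i A^{m+i−j} P_j, the map 𝓡_h : L^{q'}(0,1) → ℝ^N, 𝓡_h ζ := ∫_0^1 R_A(τ;h) P_0 ζ(τ) dτ, satisfies ‖𝓡_h‖ ≤ (e^{h‖A‖} − 1) e^{‖A‖} for h ≥ 0; in particular ‖𝓡_h‖ → 0 as h → 0. -/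
open MeasureTheory
open scoped RealInnerProductSpace

lemma aux_exp_tsum (x : ℝ) : Real.exp x = ∑' n : ℕ, x ^ n / (n.factorial : ℝ) := by
  rw [Real.exp_eq_exp_ℝ, NormedSpace.exp_eq_tsum_div]

lemma aux_summable_tail (x : ℝ) :
    Summable (fun m : ℕ => if 1 ≤ m then x ^ m / (m.factorial : ℝ) else 0) := by
  apply (summable_nat_add_iff 1).mp
  have h1 : (fun n : ℕ => if 1 ≤ n + 1 then x ^ (n + 1) / (((n + 1).factorial : ℕ) : ℝ) else 0)
      = fun n : ℕ => x ^ (n + 1) / (((n + 1).factorial : ℕ) : ℝ) := by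
    funext n; simp
  rw [h1]
  exact (summable_nat_add_iff 1).mpr (Real.summable_pow_div_factorial x)

lemma aux_tsum_tail (x : ℝ) :
    ∑' m : ℕ, (if 1 ≤ m then x ^ m / (m.factorial : ℝ) else 0) = Real.exp x - 1 := by
  rw [Summable.tsum_eq_zero_add (aux_summable_tail x)]
  have hexp : Real.exp x = ∑' n : ℕ, x ^ n / (n.factorial : ℝ) := aux_exp_tsum x
  rw [Summable.tsum_eq_zero_add (Real.summable_pow_div_factorial x)] at hexp
  simp only [pow_zero, Nat.factorial_zero, Nat.cast_one, div_one] at hexp ⊢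
  simp only [Nat.le_add_left, if_true, if_neg (by norm_num : ¬ (1:ℕ) ≤ 0)]
  linarith

set_option maxHeartbeats 1000000 in
set_option synthInstance.maxHeartbeats 400000 in
/-- the remainder operator `𝓡_h ζ = ∫₀¹ R_A(τ;h) P₀ ζ(τ) dτ`, acting on
`L^{q'}(0,1)`, has operator norm at most `(e^{h‖A‖} − 1)e^{‖A‖}`; in particular it tends
to `0` as `h → 0`. -/
theorem remainder_operator_norm_bound (N κ : ℕ) (hκN : κ ≤ N)
    (E : ℕ → Submodule ℝ (EuclideanSpace ℝ (Fin N)))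
    (hspan : (⨆ i ∈ Finset.range (κ + 1), E i) = ⊤)
    (horth : ∀ i j, i ≠ j → i ≤ κ → j ≤ κ → ∀ x ∈ E i, ∀ y ∈ E j, ⟪x, y⟫ = 0)
    (P : ℕ → EuclideanSpace ℝ (Fin N) →L[ℝ] EuclideanSpace ℝ (Fin N))
    (hPmem : ∀ i x, P i x ∈ E i)
    (hPortho : ∀ i x, ∀ y ∈ E i, ⟪x - P i x, y⟫ = 0)
    (AL : EuclideanSpace ℝ (Fin N) →L[ℝ] EuclideanSpace ℝ (Fin N))
    (q q' : ℝ) (hq : 1 < q) (hq' : q' = q / (q - 1))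
    (RA : ℝ → ℝ → EuclideanSpace ℝ (Fin N) →L[ℝ] EuclideanSpace ℝ (Fin N))
    (hRA : ∀ τ h, RA τ h = ∑ i ∈ Finset.range (κ + 1), ∑ j ∈ Finset.range (κ + 1),
      ∑' m : ℕ, if max 1 (j - i) ≤ m then
        (h ^ m * τ ^ (m + i - j) / ((m + i - j).factorial : ℝ)) •
          (P i * AL ^ (m + i - j) * P j)
      else 0) :
    (∀ h : ℝ, 0 ≤ h → ∀ ζ : ℝ → EuclideanSpace ℝ (Fin N),
      MemLp ζ (ENNReal.ofReal q') (volume.restrict (Set.Ioc (0 : ℝ) 1)) →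
      eLpNorm ζ (ENNReal.ofReal q') (volume.restrict (Set.Ioc (0 : ℝ) 1)) ≤ 1 →
      ‖∫ τ in (0 : ℝ)..1, RA τ h (P 0 (ζ τ))‖
        ≤ (Real.exp (h * ‖AL‖) - 1) * Real.exp ‖AL‖) ∧
    (∀ ε : ℝ, 0 < ε → ∃ δ : ℝ, 0 < δ ∧ ∀ h : ℝ, 0 ≤ h → h ≤ δ →
      ∀ ζ : ℝ → EuclideanSpace ℝ (Fin N),
        MemLp ζ (ENNReal.ofReal q') (volume.restrict (Set.Ioc (0 : ℝ) 1)) →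
        eLpNorm ζ (ENNReal.ofReal q') (volume.restrict (Set.Ioc (0 : ℝ) 1)) ≤ 1 →
        ‖∫ τ in (0 : ℝ)..1, RA τ h (P 0 (ζ τ))‖ ≤ ε) := by
  classical
  -- the projections are 1-Lipschitz
  have hPle : ∀ i (x : EuclideanSpace ℝ (Fin N)), ‖P i x‖ ≤ ‖x‖ := by
    intro i x
    have h0 := hPortho i x (P i x) (hPmem i x)
    rw [inner_sub_left, sub_eq_zero] at h0
    have h1 : ‖P i x‖ ^ 2 = ⟪x, P i x⟫ := by
      rw [h0, real_inner_self_eq_norm_sq]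
    have h2 : ⟪x, P i x⟫ ≤ ‖x‖ * ‖P i x‖ := real_inner_le_norm _ _
    nlinarith [norm_nonneg (P i x), norm_nonneg x]
  -- orthogonality kills the cross terms
  have hPzero : ∀ j, j ≠ 0 → j ≤ κ → ∀ x : EuclideanSpace ℝ (Fin N), P j (P 0 x) = 0 := by
    intro j hj hjκ x
    have h0 := hPortho j (P 0 x) (P j (P 0 x)) (hPmem j (P 0 x))
    rw [inner_sub_left, sub_eq_zero] at h0
    have key : ⟪P j (P 0 x), P j (P 0 x)⟫ = 0 := by
      rw [← h0]
      exact horth 0 j (Ne.symm hj) (Nat.zero_le κ) hjκ (P 0 x) (hPmem 0 x) _ (hPmem j (P 0 x))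
    exact inner_self_eq_zero.mp key
  have hpow : ∀ (k : ℕ) (v : EuclideanSpace ℝ (Fin N)), ‖(AL ^ k) v‖ ≤ ‖AL‖ ^ k * ‖v‖ := by
    intro k
    induction k with
    | zero => intro v; rw [pow_zero, ContinuousLinearMap.one_apply, pow_zero, one_mul]
    | succ n ih =>
        intro v
        rw [pow_succ, ContinuousLinearMap.mul_apply]
        calc ‖(AL ^ n) (AL v)‖ ≤ ‖AL‖ ^ n * ‖AL v‖ := ih (AL v)
          _ ≤ ‖AL‖ ^ n * (‖AL‖ * ‖v‖) := by
              gcongr; exact AL.le_opNorm v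
          _ = ‖AL‖ ^ (n + 1) * ‖v‖ := by ring
  set M : ℝ := max 1 ‖AL‖ with hMdef
  have hM1 : (1 : ℝ) ≤ M := le_max_left _ _
  have hM0 : (0 : ℝ) ≤ M := le_trans zero_le_one hM1
  have hAM : ‖AL‖ ≤ M := le_max_right _ _
  -- summability of the series of operators
  have hsummable : ∀ (h τ : ℝ), 0 ≤ h → 0 ≤ τ → τ ≤ 1 → ∀ i j : ℕ,
      Summable (fun m : ℕ => if max 1 (j - i) ≤ m then
        (h ^ m * τ ^ (m + i - j) / ((m + i - j).factorial : ℝ)) •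
          (P i * AL ^ (m + i - j) * P j) else 0) := by
    intro h τ hh hτ0 hτ1 i j
    have hg : Summable (fun m : ℕ => (h * M) ^ m * M ^ i / ((m - j).factorial : ℝ)) := by
      apply (summable_nat_add_iff j).mp
      have h1 : (fun m : ℕ => (h * M) ^ (m + j) * M ^ i / (((m + j - j).factorial : ℕ) : ℝ))
          = fun m : ℕ => ((h * M) ^ j * M ^ i) * ((h * M) ^ m / ((m.factorial : ℕ) : ℝ)) := by
        funext m
        rw [Nat.add_sub_cancel, pow_add]
        ring
      rw [h1]
      exact (Real.summable_pow_div_factorial (h * M)).mul_left _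
    apply Summable.of_norm_bounded hg
    intro m
    by_cases hc : max 1 (j - i) ≤ m
    · have hm1 : 1 ≤ m := le_trans (le_max_left _ _) hc
      have hmji : j - i ≤ m := le_trans (le_max_right _ _) hc
      have hk1 : m - j ≤ m + i - j := by omega
      have hk2 : m + i - j ≤ m + i := by omega
      rw [if_pos hc]
      rw [norm_smul (h ^ m * τ ^ (m + i - j) / ((m + i - j).factorial : ℝ)) (P i * AL ^ (m + i - j) * P j)]
      have hop : ‖P i * AL ^ (m + i - j) * P j‖ ≤ M ^ (m + i) := by
        apply ContinuousLinearMap.opNorm_le_bound _ (by positivity)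
        intro v
        calc ‖(P i * AL ^ (m + i - j) * P j) v‖
            = ‖P i ((AL ^ (m + i - j)) (P j v))‖ := by
              simp [ContinuousLinearMap.mul_apply]
          _ ≤ ‖(AL ^ (m + i - j)) (P j v)‖ := hPle _ _
          _ ≤ ‖AL‖ ^ (m + i - j) * ‖P j v‖ := hpow _ _
          _ ≤ ‖AL‖ ^ (m + i - j) * ‖v‖ :=
              mul_le_mul_of_nonneg_left (hPle _ _) (pow_nonneg (norm_nonneg _) _)
          _ ≤ M ^ (m + i) * ‖v‖ := by
              apply mul_le_mul_of_nonneg_right _ (norm_nonneg v)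
              calc ‖AL‖ ^ (m + i - j) ≤ M ^ (m + i - j) := by gcongr
                _ ≤ M ^ (m + i) := pow_le_pow_right₀ hM1 hk2
      have hcn : ‖h ^ m * τ ^ (m + i - j) / ((m + i - j).factorial : ℝ)‖
          = h ^ m * τ ^ (m + i - j) / ((m + i - j).factorial : ℝ) := by
        rw [Real.norm_eq_abs, abs_of_nonneg (by positivity)]
      rw [hcn]
      calc (h ^ m * τ ^ (m + i - j) / ((m + i - j).factorial : ℝ)) * ‖P i * AL ^ (m + i - j) * P j‖
          ≤ (h ^ m * 1 / (((m - j).factorial : ℕ) : ℝ)) * M ^ (m + i) := by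
            apply mul_le_mul _ hop (norm_nonneg _) (by positivity)
            apply div_le_div₀ (by positivity) _ (Nat.cast_pos.mpr (Nat.factorial_pos _)) _
            · exact mul_le_mul_of_nonneg_left (pow_le_one₀ hτ0 hτ1) (by positivity)
            · exact_mod_cast Nat.factorial_le hk1
        _ = (h * M) ^ m * M ^ i / ((m - j).factorial : ℝ) := by
            rw [mul_pow, pow_add]; ring
    · rw [if_neg hc, norm_zero]
      positivity
  -- pointwise bound on (0,1]
  have hmain : ∀ (h τ : ℝ), 0 ≤ h → 0 < τ → τ ≤ 1 →
      ∀ z : EuclideanSpace ℝ (Fin N),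
      ‖RA τ h (P 0 z)‖ ≤ (Real.exp (h * ‖AL‖) - 1) * Real.exp ‖AL‖ * ‖z‖ := by
    intro h τ hh hτ0 hτ1 z
    set x := h * ‖AL‖ with hxdef
    have hx0 : 0 ≤ x := mul_nonneg hh (norm_nonneg _)
    have happ : ∀ i j : ℕ,
        ((∑' m : ℕ, if max 1 (j - i) ≤ m then
            (h ^ m * τ ^ (m + i - j) / ((m + i - j).factorial : ℝ)) •
              (P i * AL ^ (m + i - j) * P j) else 0) (P 0 z))
        = ∑' m : ℕ, (if max 1 (j - i) ≤ m then
            (h ^ m * τ ^ (m + i - j) / ((m + i - j).factorial : ℝ)) •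
              (P i ((AL ^ (m + i - j)) (P j (P 0 z)))) else 0) := by
      intro i j
      have h1 := (ContinuousLinearMap.apply ℝ (EuclideanSpace ℝ (Fin N)) (P 0 z)).map_tsum
        (hsummable h τ hh hτ0.le hτ1 i j)
      simp only [ContinuousLinearMap.apply_apply] at h1
      rw [h1]
      congr 1
      funext m
      by_cases hc : max 1 (j - i) ≤ m
      · rw [if_pos hc, if_pos hc, ContinuousLinearMap.smul_apply,
          ContinuousLinearMap.mul_apply, ContinuousLinearMap.mul_apply]
      · rw [if_neg hc, if_neg hc, ContinuousLinearMap.zero_apply]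
    rw [hRA, ContinuousLinearMap.sum_apply]
    have hrow : ∀ i ∈ Finset.range (κ + 1),
        (∑ j ∈ Finset.range (κ + 1), ∑' m : ℕ, if max 1 (j - i) ≤ m then
            (h ^ m * τ ^ (m + i - j) / ((m + i - j).factorial : ℝ)) •
              (P i * AL ^ (m + i - j) * P j) else 0) (P 0 z)
          = ∑' m : ℕ, (if 1 ≤ m then
              (h ^ m * τ ^ (m + i) / ((m + i).factorial : ℝ)) •
                (P i ((AL ^ (m + i)) (P 0 (P 0 z)))) else 0) := by
      intro i _
      rw [ContinuousLinearMap.sum_apply]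
      rw [Finset.sum_eq_single_of_mem 0 (Finset.mem_range.mpr (Nat.succ_pos κ)) ?_]
      · rw [happ i 0]
        congr 1
        funext m
        simp
      · intro j hj hj0
        rw [happ i j]
        have hjκ : j ≤ κ := Nat.lt_succ_iff.mp (Finset.mem_range.mp hj)
        simp only [hPzero j hj0 hjκ z, map_zero, smul_zero, ite_self, tsum_zero]
    rw [Finset.sum_congr rfl hrow]
    -- now bound the remaining single sum
    have hterm : ∀ i m : ℕ,
        ‖(if 1 ≤ m then (h ^ m * τ ^ (m + i) / ((m + i).factorial : ℝ)) •
            (P i ((AL ^ (m + i)) (P 0 (P 0 z)))) else 0)‖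
          ≤ (‖AL‖ ^ i / (i.factorial : ℝ)) *
              (if 1 ≤ m then x ^ m / (m.factorial : ℝ) else 0) * ‖z‖ := by
      intro i m
      by_cases hc : 1 ≤ m
      · rw [if_pos hc, if_pos hc]
        rw [norm_smul (h ^ m * τ ^ (m + i) / ((m + i).factorial : ℝ))
          (P i ((AL ^ (m + i)) (P 0 (P 0 z))))]
        have hcn : ‖h ^ m * τ ^ (m + i) / ((m + i).factorial : ℝ)‖
            = h ^ m * τ ^ (m + i) / ((m + i).factorial : ℝ) := by
          rw [Real.norm_eq_abs, abs_of_nonneg (by positivity)]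
        rw [hcn]
        have hv : ‖P i ((AL ^ (m + i)) (P 0 (P 0 z)))‖ ≤ ‖AL‖ ^ (m + i) * ‖z‖ := by
          calc ‖P i ((AL ^ (m + i)) (P 0 (P 0 z)))‖
              ≤ ‖(AL ^ (m + i)) (P 0 (P 0 z))‖ := hPle _ _
            _ ≤ ‖AL‖ ^ (m + i) * ‖P 0 (P 0 z)‖ := hpow _ _
            _ ≤ ‖AL‖ ^ (m + i) * ‖z‖ := by
                apply mul_le_mul_of_nonneg_left _ (pow_nonneg (norm_nonneg _) _)
                exact le_trans (hPle _ _) (hPle _ _)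
        have hfac : ((i.factorial * m.factorial : ℕ) : ℝ) ≤ (((m + i).factorial : ℕ) : ℝ) := by
          exact_mod_cast Nat.le_of_dvd (Nat.factorial_pos _)
            (by simpa [Nat.add_comm] using Nat.factorial_mul_factorial_dvd_factorial_add i m)
        calc (h ^ m * τ ^ (m + i) / ((m + i).factorial : ℝ)) * ‖P i ((AL ^ (m + i)) (P 0 (P 0 z)))‖
            ≤ (h ^ m * 1 / ((i.factorial * m.factorial : ℕ) : ℝ)) * (‖AL‖ ^ (m + i) * ‖z‖) := by
              apply mul_le_mul _ hv (norm_nonneg _) (by positivity)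
              apply div_le_div₀ (by positivity) _ (by positivity) hfac
              exact mul_le_mul_of_nonneg_left (pow_le_one₀ hτ0.le hτ1) (by positivity)
          _ = (‖AL‖ ^ i / (i.factorial : ℝ)) * (x ^ m / (m.factorial : ℝ)) * ‖z‖ := by
              rw [hxdef, mul_pow, pow_add]
              push_cast
              have hi : ((i.factorial : ℕ) : ℝ) ≠ 0 := Nat.cast_ne_zero.mpr (Nat.factorial_ne_zero i)
              have hm : ((m.factorial : ℕ) : ℝ) ≠ 0 := Nat.cast_ne_zero.mpr (Nat.factorial_ne_zero m)
              field_simp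
      · rw [if_neg hc, if_neg hc, norm_zero, mul_zero, zero_mul]
    have hbsummable : ∀ i : ℕ, Summable (fun m : ℕ =>
        (‖AL‖ ^ i / (i.factorial : ℝ)) * (if 1 ≤ m then x ^ m / (m.factorial : ℝ) else 0) * ‖z‖) :=
      fun i => ((aux_summable_tail x).mul_left _).mul_right _
    have hnsummable : ∀ i : ℕ, Summable (fun m : ℕ =>
        ‖(if 1 ≤ m then (h ^ m * τ ^ (m + i) / ((m + i).factorial : ℝ)) •
            (P i ((AL ^ (m + i)) (P 0 (P 0 z)))) else 0)‖) :=
      fun i => Summable.of_nonneg_of_le (fun m => norm_nonneg _) (hterm i) (hbsummable i)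
    have htsum : ∀ i : ℕ,
        ‖∑' m : ℕ, (if 1 ≤ m then (h ^ m * τ ^ (m + i) / ((m + i).factorial : ℝ)) •
            (P i ((AL ^ (m + i)) (P 0 (P 0 z)))) else 0)‖
          ≤ (‖AL‖ ^ i / (i.factorial : ℝ)) * (Real.exp x - 1) * ‖z‖ := by
      intro i
      calc ‖∑' m : ℕ, (if 1 ≤ m then (h ^ m * τ ^ (m + i) / ((m + i).factorial : ℝ)) •
            (P i ((AL ^ (m + i)) (P 0 (P 0 z)))) else 0)‖
          ≤ ∑' m : ℕ, ‖(if 1 ≤ m then (h ^ m * τ ^ (m + i) / ((m + i).factorial : ℝ)) •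
            (P i ((AL ^ (m + i)) (P 0 (P 0 z)))) else 0)‖ := norm_tsum_le_tsum_norm (hnsummable i)
        _ ≤ ∑' m : ℕ, (‖AL‖ ^ i / (i.factorial : ℝ)) *
              (if 1 ≤ m then x ^ m / (m.factorial : ℝ) else 0) * ‖z‖ :=
            Summable.tsum_le_tsum (hterm i) (hnsummable i) (hbsummable i)
        _ = (‖AL‖ ^ i / (i.factorial : ℝ)) * (Real.exp x - 1) * ‖z‖ := by
            rw [tsum_mul_right, tsum_mul_left, aux_tsum_tail]
    calc ‖∑ i ∈ Finset.range (κ + 1), ∑' m : ℕ, (if 1 ≤ m then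
            (h ^ m * τ ^ (m + i) / ((m + i).factorial : ℝ)) •
              (P i ((AL ^ (m + i)) (P 0 (P 0 z)))) else 0)‖
        ≤ ∑ i ∈ Finset.range (κ + 1), ‖∑' m : ℕ, (if 1 ≤ m then
            (h ^ m * τ ^ (m + i) / ((m + i).factorial : ℝ)) •
              (P i ((AL ^ (m + i)) (P 0 (P 0 z)))) else 0)‖ := norm_sum_le _ _
      _ ≤ ∑ i ∈ Finset.range (κ + 1),
            (‖AL‖ ^ i / (i.factorial : ℝ)) * (Real.exp x - 1) * ‖z‖ :=
          Finset.sum_le_sum fun i _ => htsum i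
      _ = (∑ i ∈ Finset.range (κ + 1), ‖AL‖ ^ i / (i.factorial : ℝ)) *
            (Real.exp x - 1) * ‖z‖ := by
          rw [← Finset.sum_mul, ← Finset.sum_mul]
      _ ≤ Real.exp ‖AL‖ * (Real.exp x - 1) * ‖z‖ := by
          have hsc : ∑ i ∈ Finset.range (κ + 1), ‖AL‖ ^ i / (i.factorial : ℝ)
              ≤ Real.exp ‖AL‖ := by
            rw [aux_exp_tsum ‖AL‖]
            exact Summable.sum_le_tsum _ (fun i _ => by positivity)
              (Real.summable_pow_div_factorial _)
          have h1 : (0:ℝ) ≤ Real.exp x - 1 := by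
            have := Real.one_le_exp hx0
            linarith
          apply mul_le_mul_of_nonneg_right _ (norm_nonneg z)
          exact mul_le_mul_of_nonneg_right hsc h1
      _ = (Real.exp x - 1) * Real.exp ‖AL‖ * ‖z‖ := by ring
  -- integral estimate
  have hq'1 : (1 : ℝ) ≤ q' := by
    rw [hq', le_div_iff₀ (by linarith)]
    linarith
  have hq'e : (1 : ENNReal) ≤ ENNReal.ofReal q' := by
    rw [← ENNReal.ofReal_one]
    exact ENNReal.ofReal_le_ofReal hq'1
  have μprob : IsProbabilityMeasure (volume.restrict (Set.Ioc (0 : ℝ) 1)) := by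
    constructor
    rw [Measure.restrict_apply_univ]
    simp
  have part1 : ∀ h : ℝ, 0 ≤ h → ∀ ζ : ℝ → EuclideanSpace ℝ (Fin N),
      MemLp ζ (ENNReal.ofReal q') (volume.restrict (Set.Ioc (0 : ℝ) 1)) →
      eLpNorm ζ (ENNReal.ofReal q') (volume.restrict (Set.Ioc (0 : ℝ) 1)) ≤ 1 →
      ‖∫ τ in (0 : ℝ)..1, RA τ h (P 0 (ζ τ))‖
        ≤ (Real.exp (h * ‖AL‖) - 1) * Real.exp ‖AL‖ := by
    intro h hh ζ hζ hζ1
    set μ := volume.restrict (Set.Ioc (0 : ℝ) 1) with hμ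
    set C := (Real.exp (h * ‖AL‖) - 1) * Real.exp ‖AL‖ with hC
    have hC0 : 0 ≤ C := by
      have := Real.one_le_exp (mul_nonneg hh (norm_nonneg AL))
      have := (Real.exp_pos ‖AL‖).le
      rw [hC]
      nlinarith
    have hζint : Integrable ζ μ :=
      memLp_one_iff_integrable.mp (hζ.mono_exponent hq'e)
    have hnorm1 : ∫ τ, ‖ζ τ‖ ∂μ ≤ 1 := by
      have e1 : eLpNorm ζ 1 μ ≤ 1 :=
        le_trans (eLpNorm_le_eLpNorm_of_exponent_le hq'e hζ.aestronglyMeasurable) hζ1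
      have e2 : ∫ τ, ‖ζ τ‖ ∂μ = (eLpNorm ζ 1 μ).toReal := by
        rw [integral_norm_eq_lintegral_enorm hζ.aestronglyMeasurable,
          eLpNorm_one_eq_lintegral_enorm]
      rw [e2]
      exact ENNReal.toReal_le_of_le_ofReal zero_le_one (by simpa using e1)
    have hbd : ∀ᵐ τ ∂μ, ‖RA τ h (P 0 (ζ τ))‖ ≤ C * ‖ζ τ‖ := by
      filter_upwards [ae_restrict_mem measurableSet_Ioc] with τ hτ
      exact hmain h τ hh hτ.1 hτ.2 (ζ τ)
    rw [intervalIntegral.integral_of_le zero_le_one]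
    calc ‖∫ τ in Set.Ioc (0:ℝ) 1, RA τ h (P 0 (ζ τ))‖
        ≤ ∫ τ, C * ‖ζ τ‖ ∂μ := norm_integral_le_of_norm_le (hζint.norm.const_mul C) hbd
      _ = C * ∫ τ, ‖ζ τ‖ ∂μ := integral_const_mul C _
      _ ≤ C * 1 := mul_le_mul_of_nonneg_left hnorm1 hC0
      _ = C := mul_one C
  refine ⟨part1, ?_⟩
  intro ε hε
  have hcont : Continuous fun h : ℝ => (Real.exp (h * ‖AL‖) - 1) * Real.exp ‖AL‖ :=
    (((Real.continuous_exp.comp (continuous_id.mul continuous_const)).sub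
      continuous_const).mul continuous_const)
  have h0 : ((Real.exp (0 * ‖AL‖) - 1) * Real.exp ‖AL‖ : ℝ) = 0 := by simp
  have htend : Filter.Tendsto (fun h : ℝ => (Real.exp (h * ‖AL‖) - 1) * Real.exp ‖AL‖)
      (nhds 0) (nhds 0) := by
    have := hcont.tendsto 0
    rwa [h0] at this
  have hev : ∀ᶠ h : ℝ in nhds 0, (Real.exp (h * ‖AL‖) - 1) * Real.exp ‖AL‖ < ε :=
    htend.eventually (gt_mem_nhds hε)
  obtain ⟨δ, hδ0, hδ⟩ := Metric.eventually_nhds_iff.mp hev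
  refine ⟨δ / 2, by linarith, ?_⟩
  intro h hh hhδ ζ hζ hζ1
  have hlt : (Real.exp (h * ‖AL‖) - 1) * Real.exp ‖AL‖ < ε := by
    apply hδ
    rw [Real.dist_eq, sub_zero, abs_of_nonneg hh]
    linarith
  exact le_trans (part1 h hh ζ hζ hζ1) hlt.le
end
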